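/- arXiv:quant-ph/0508163 — 5 statements merged into one kernel-verified Lean document; each statement's English description precedes it below -/
import Mathlib

section
/- Let p, q be positive integers and let A be a density matrix indexed by (Fin p × Fin q) (acting on ℂ^p ⊗ ℂ^q) all of whose row sums are zero. If the partial transpose A^pT has at least one nonzero row sum, then A is not separable in ℂ^p ⊗ ℂ^q. -/
open Matrix BigOperators Kronecker
open scoped ComplexOrder

noncomputable section

/-- The `(p,q)`-partial transpose of a matrix indexed by `Fin p × Fin q`:
`A^pT_{(i,j),(k,l)} = A_{(i,l),(k,j)}`. -/
def ptrans {p q : ℕ} {α : Type*} (A : Matrix (Fin p × Fin q) (Fin p × Fin q) α) :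
    Matrix (Fin p × Fin q) (Fin p × Fin q) α :=
  fun x y => A (x.1, y.2) (y.1, x.2)

/-- A density matrix: Hermitian, positive semidefinite, with trace 1. -/
def IsDensityMatrix {n : Type*} [Fintype n] (ρ : Matrix n n ℂ) : Prop :=
  ρ.IsHermitian ∧ ρ.PosSemidef ∧ ρ.trace = 1

/-- Separability in ℂ^p ⊗ ℂ^q : a finite convex combination of Kronecker products
of density matrices. -/
def SeparableState {p q : ℕ} (A : Matrix (Fin p × Fin q) (Fin p × Fin q) ℂ) : Prop :=
  ∃ (m : ℕ) (c : Fin m → ℝ) (ρ : Fin m → Matrix (Fin p) (Fin p) ℂ)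
    (η : Fin m → Matrix (Fin q) (Fin q) ℂ),
    (∀ i, 0 ≤ c i) ∧ (∑ i, c i) = 1 ∧
    (∀ i, IsDensityMatrix (ρ i)) ∧ (∀ i, IsDensityMatrix (η i)) ∧
    A = ∑ i, (c i : ℂ) • (ρ i ⊗ₖ η i)

/-- Separability of a real matrix, viewed as a complex matrix. -/
def SeparableStateR {p q : ℕ} (A : Matrix (Fin p × Fin q) (Fin p × Fin q) ℝ) : Prop :=
  SeparableState (A.map (fun x => (x : ℂ)))

/-- A square real matrix is line sum symmetric if each row sum equals the
corresponding column sum. -/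
def LineSumSymm {q : ℕ} (B : Matrix (Fin q) (Fin q) ℝ) : Prop :=
  ∀ j, (∑ l, B j l) = ∑ l, B l j

/-- A simple circuit matrix: there are distinct indices `i_1, …, i_k` (`k ≥ 1`) with
`C_{i_m i_{m+1}} = 1` (cyclically) and all other entries 0. -/
def IsSimpleCircuit {q : ℕ} (C : Matrix (Fin q) (Fin q) ℝ) : Prop :=
  ∃ (k : ℕ) (hk : 0 < k) (f : Fin k → Fin q), Function.Injective f ∧
    ∀ a b : Fin q, C a b =
      if ∃ m : Fin k, a = f m ∧ b = f ⟨((m : ℕ) + 1) % k, Nat.mod_lt _ hk⟩ then 1 else 0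

/-- The 2q×2q block matrix `[[A11, A12], [A21, A22]]` indexed by `Fin 2 × Fin q`. -/
def twoBlock {q : ℕ} {α : Type*} (A11 A12 A21 A22 : Matrix (Fin q) (Fin q) α) :
    Matrix (Fin 2 × Fin q) (Fin 2 × Fin q) α :=
  fun a b =>
    if a.1 = 0 then (if b.1 = 0 then A11 a.2 b.2 else A12 a.2 b.2)
    else (if b.1 = 0 then A21 a.2 b.2 else A22 a.2 b.2)

/-- The q×q block `A^{i,k}` of a matrix indexed by `Fin p × Fin q`. -/
def blockOf {p q : ℕ} (A : Matrix (Fin p × Fin q) (Fin p × Fin q) ℝ) (i k : Fin p) :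
    Matrix (Fin q) (Fin q) ℝ :=
  fun j l => A (i, j) (k, l)

/-!
Write `A = ∑ cᵢ • ρᵢ ⊗ₖ ηᵢ`. The sum of all entries of `A` is `𝟙* A 𝟙 = ∑ cᵢ (𝟙* ρᵢ 𝟙)(𝟙* ηᵢ 𝟙)`,
a sum of nonnegative terms; as it is zero, every term vanishes, and for a positive semidefinite
`ρ` the equation `𝟙* ρ 𝟙 = 0` forces `ρ 𝟙 = 0`. So in each term `cᵢ = 0`, or `ρᵢ` or `ηᵢ` has zero
row sums. Since `(ρ ⊗ₖ η)^pT = ρ ⊗ₖ ηᵀ` and the row sums of `ηᵀ` are the conjugates of those of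
the Hermitian `η`, every term of a row sum of `A^pT` vanishes too.
-/

section KroneckerRowSums

variable {ι m n R : Type*} [Fintype ι] [Fintype m] [Fintype n] [CommSemiring R]

theorem Matrix.sum_kronecker_apply (M : Matrix m m R) (N : Matrix n n R) (x : m × n) :
    ∑ y, (M ⊗ₖ N) x y = (∑ j, M x.1 j) * ∑ l, N x.2 l := by
  rw [Finset.sum_mul_sum, ← Finset.univ_product_univ, Finset.sum_product]
  rfl

theorem Matrix.sum_sum_smul_kronecker_apply (c : ι → R) (M : ι → Matrix m m R)
    (N : ι → Matrix n n R) (x : m × n) :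
    ∑ y, (∑ i, c i • (M i ⊗ₖ N i)) x y = ∑ i, c i * ((∑ j, M i x.1 j) * ∑ l, N i x.2 l) := by
  simp only [Matrix.sum_apply, Matrix.smul_apply, smul_eq_mul]
  rw [Finset.sum_comm]
  simp only [← Finset.mul_sum, Matrix.sum_kronecker_apply]

theorem Matrix.sum_sum_sum_smul_kronecker (c : ι → R) (M : ι → Matrix m m R)
    (N : ι → Matrix n n R) :
    ∑ x, ∑ y, (∑ i, c i • (M i ⊗ₖ N i)) x y
      = ∑ i, c i * ((∑ a, ∑ b, M i a b) * ∑ a, ∑ b, N i a b) := by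
  simp only [Matrix.sum_sum_smul_kronecker_apply]
  rw [Finset.sum_comm]
  refine Finset.sum_congr rfl fun i _ => ?_
  rw [← Finset.mul_sum, Fintype.sum_prod_type, Fintype.sum_mul_sum]

end KroneckerRowSums

section Semidefinite

variable {n 𝕜 : Type*} [Fintype n] [RCLike 𝕜] {M : Matrix n n 𝕜}

theorem Matrix.star_one_dotProduct_mulVec_one (M : Matrix n n 𝕜) :
    star (1 : n → 𝕜) ⬝ᵥ M *ᵥ 1 = ∑ i, ∑ j, M i j := by
  simp [dotProduct, mulVec]

theorem Matrix.PosSemidef.sum_sum_nonneg (hM : M.PosSemidef) : 0 ≤ ∑ i, ∑ j, M i j :=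
  M.star_one_dotProduct_mulVec_one ▸ hM.dotProduct_mulVec_nonneg 1

theorem Matrix.PosSemidef.sum_apply_eq_zero_of_sum_sum_eq_zero (hM : M.PosSemidef)
    (h : ∑ i, ∑ j, M i j = 0) (i : n) : ∑ j, M i j = 0 := by
  rw [← M.star_one_dotProduct_mulVec_one, hM.dotProduct_mulVec_zero_iff] at h
  simpa [mulVec, dotProduct] using congrFun h i

theorem Matrix.IsHermitian.sum_apply_left (hM : M.IsHermitian) (j : n) :
    ∑ i, M i j = star (∑ i, M j i) := by
  rw [star_sum]
  exact Finset.sum_congr rfl fun i _ => (hM.apply i j).symm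

end Semidefinite

theorem Matrix.eq_zero_or_rowSums_eq_zero_of_sum_smul_kronecker {ι m n 𝕜 : Type*}
    [Fintype ι] [Fintype m] [Fintype n] [RCLike 𝕜] {c : ι → 𝕜} {M : ι → Matrix m m 𝕜}
    {N : ι → Matrix n n 𝕜} (hc : ∀ i, 0 ≤ c i) (hM : ∀ i, (M i).PosSemidef)
    (hN : ∀ i, (N i).PosSemidef) (h : ∀ x, ∑ y, (∑ i, c i • (M i ⊗ₖ N i)) x y = 0) (i : ι) :
    c i = 0 ∨ (∀ a, ∑ b, M i a b = 0) ∨ (∀ a, ∑ b, N i a b = 0) := by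
  have htotal : ∑ i, c i * ((∑ a, ∑ b, M i a b) * ∑ a, ∑ b, N i a b) = 0 := by
    rw [← Matrix.sum_sum_sum_smul_kronecker]
    exact Finset.sum_eq_zero fun x _ => h x
  have hterm := (Finset.sum_eq_zero_iff_of_nonneg fun i _ => mul_nonneg (hc i)
    (mul_nonneg (hM i).sum_sum_nonneg (hN i).sum_sum_nonneg)).1 htotal i (Finset.mem_univ i)
  rcases mul_eq_zero.1 hterm with hci | hMN
  · exact .inl hci
  rcases mul_eq_zero.1 hMN with hMi | hNi
  · exact .inr (.inl ((hM i).sum_apply_eq_zero_of_sum_sum_eq_zero hMi))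
  · exact .inr (.inr ((hN i).sum_apply_eq_zero_of_sum_sum_eq_zero hNi))

section PartialTranspose

variable {p q : ℕ} {α : Type*}

theorem ptrans_sum {ι : Type*} [AddCommMonoid α] (s : Finset ι)
    (A : ι → Matrix (Fin p × Fin q) (Fin p × Fin q) α) :
    ptrans (∑ i ∈ s, A i) = ∑ i ∈ s, ptrans (A i) := by
  ext x y
  simp [ptrans, Matrix.sum_apply]

theorem ptrans_smul {R : Type*} [SMul R α] (c : R)
    (A : Matrix (Fin p × Fin q) (Fin p × Fin q) α) :
    ptrans (c • A) = c • ptrans A :=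
  rfl

theorem ptrans_kronecker [Mul α] (M : Matrix (Fin p) (Fin p) α) (N : Matrix (Fin q) (Fin q) α) :
    ptrans (M ⊗ₖ N) = M ⊗ₖ Nᵀ :=
  rfl

end PartialTranspose

theorem stmt0_general {p q : ℕ}
    (A : Matrix (Fin p × Fin q) (Fin p × Fin q) ℂ)
    (hrow : ∀ x, (∑ y, A x y) = 0)
    (hpt : ∃ x, (∑ y, ptrans A x y) ≠ 0) :
    ¬ SeparableState A := by
  rintro ⟨m, c, ρ, η, hc, -, hρ, hη, rfl⟩
  obtain ⟨x, hx⟩ := hpt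
  have hvanish := Matrix.eq_zero_or_rowSums_eq_zero_of_sum_smul_kronecker
    (fun i => by exact_mod_cast hc i) (fun i => (hρ i).2.1) (fun i => (hη i).2.1) hrow
  apply hx
  simp only [ptrans_sum, ptrans_smul, ptrans_kronecker, Matrix.sum_sum_smul_kronecker_apply]
  refine Finset.sum_eq_zero fun i _ => ?_
  rcases hvanish i with hci | hρi | hηi
  · rw [hci, zero_mul]
  · rw [hρi, zero_mul, mul_zero]
  · simp only [transpose_apply]
    rw [(hη i).1.sum_apply_left, hηi, star_zero, mul_zero, mul_zero]

/-- A density matrix on ℂ^p ⊗ ℂ^q with zero row sums whose partial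
transpose has a nonzero row sum is not separable. -/
theorem stmt0 {p q : ℕ} (hp : 0 < p) (hq : 0 < q)
    (A : Matrix (Fin p × Fin q) (Fin p × Fin q) ℂ)
    (hA : IsDensityMatrix A)
    (hrow : ∀ x, (∑ y, A x y) = 0)
    (hpt : ∃ x, (∑ y, ptrans A x y) ≠ 0) :
    ¬ SeparableState A :=
  stmt0_general A hrow hpt
end
end

section
/- Let A be a real symmetric matrix indexed by (Fin p × Fin q) with nonpositive off-diagonal entries, trace 1, and all row sums equal to zero (i.e., A ∈ S_1^0). Then the partial transpose A^pT has all row sums equal to zero if and only if A^pT is positive semidefinite. -/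
open Matrix BigOperators Kronecker
open scoped ComplexOrder

noncomputable section

/-! The direction "zero row sums ⇒ PSD" is the classical fact that a symmetric matrix with
nonpositive off-diagonal entries and zero row sums is a weighted graph Laplacian, whose quadratic
form is `½ ∑ (-B u v) (x u - x v)²`. For the converse, the partial transpose only permutes the
entries of `A`, so the quadratic form of `A^pT` vanishes on the all-ones vector; for a PSD matrix
this forces the all-ones vector into the kernel, i.e. zero row sums. -/

namespace Matrix

variable {n : Type*} [Fintype n]

lemma dotProduct_mulVec_eq_half_sum_sq {B : Matrix n n ℝ} (hsymm : B.IsSymm)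
    (hrow : ∀ u, ∑ v, B u v = 0) (x : n → ℝ) :
    x ⬝ᵥ B *ᵥ x = 1 / 2 * ∑ u, ∑ v, -B u v * (x u - x v) ^ 2 := by
  have hcol : ∀ v, ∑ u, B u v = 0 := fun v => by
    simpa only [hsymm.apply] using hrow v
  have expand : ∀ u v, -B u v * (x u - x v) ^ 2
      = 2 * (x u * (B u v * x v)) - B u v * x u ^ 2 - B u v * x v ^ 2 := fun _ _ => by ring
  have hrow_sq : ∑ u, ∑ v, B u v * x u ^ 2 = 0 :=
    Finset.sum_eq_zero fun u _ => by rw [← Finset.sum_mul, hrow u, zero_mul]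
  have hcol_sq : ∑ u, ∑ v, B u v * x v ^ 2 = 0 := by
    rw [Finset.sum_comm]
    exact Finset.sum_eq_zero fun v _ => by rw [← Finset.sum_mul, hcol v, zero_mul]
  simp only [expand, Finset.sum_sub_distrib, hrow_sq, hcol_sq, sub_zero, ← Finset.mul_sum]
  simp only [dotProduct, mulVec]
  ring

lemma posSemidef_of_offDiag_nonpos_of_sum_eq_zero {B : Matrix n n ℝ} (hsymm : B.IsSymm)
    (hoff : ∀ u v, u ≠ v → B u v ≤ 0) (hrow : ∀ u, ∑ v, B u v = 0) : B.PosSemidef := by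
  refine posSemidef_iff_dotProduct_mulVec.mpr ⟨hsymm, fun x => ?_⟩
  rw [star_trivial, dotProduct_mulVec_eq_half_sum_sq hsymm hrow]
  refine mul_nonneg (by norm_num) (Finset.sum_nonneg fun u _ => Finset.sum_nonneg fun v _ => ?_)
  rcases eq_or_ne u v with rfl | huv
  · simp
  · exact mul_nonneg (neg_nonneg.mpr (hoff u v huv)) (sq_nonneg _)

lemma PosSemidef.sum_eq_zero_of_sum_sum_eq_zero {B : Matrix n n ℝ} (hB : B.PosSemidef)
    (htot : ∑ u, ∑ v, B u v = 0) (u : n) : ∑ v, B u v = 0 := by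
  have hform : star (fun _ => (1 : ℝ)) ⬝ᵥ B *ᵥ (fun _ => 1) = 0 := by
    simpa [dotProduct, mulVec] using htot
  simpa [mulVec, dotProduct] using congrFun ((hB.dotProduct_mulVec_zero_iff _).mp hform) u

end Matrix

section PartialTranspose

variable {p q : ℕ} {α : Type*}

lemma isSymm_ptrans {A : Matrix (Fin p × Fin q) (Fin p × Fin q) α} (hA : A.IsSymm) :
    (ptrans A).IsSymm :=
  IsSymm.ext fun x y => hA.apply (x.1, y.2) (y.1, x.2)

lemma ptrans_apply_nonpos [Preorder α] [Zero α] {A : Matrix (Fin p × Fin q) (Fin p × Fin q) α}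
    (hoff : ∀ x y, x ≠ y → A x y ≤ 0) {x y : Fin p × Fin q} (hxy : x ≠ y) :
    ptrans A x y ≤ 0 :=
  hoff _ _ fun h => hxy (Prod.ext (Prod.mk.inj h).1 (Prod.mk.inj h).2.symm)

lemma sum_sum_ptrans [AddCommMonoid α] (A : Matrix (Fin p × Fin q) (Fin p × Fin q) α) :
    ∑ x, ∑ y, ptrans A x y = ∑ x, ∑ y, A x y := by
  have swap : Function.Involutive fun z : (Fin p × Fin q) × (Fin p × Fin q) =>
      ((z.1.1, z.2.2), (z.2.1, z.1.2)) := fun _ => rfl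
  rw [← Fintype.sum_prod_type' (ptrans A), ← Fintype.sum_prod_type' A]
  exact Equiv.sum_comp (swap.toPerm _) fun z : (Fin p × Fin q) × (Fin p × Fin q) => A z.1 z.2

end PartialTranspose

theorem stmt3_general {p q : ℕ} (A : Matrix (Fin p × Fin q) (Fin p × Fin q) ℝ)
    (hsymm : A.IsSymm)
    (hoff : ∀ x y, x ≠ y → A x y ≤ 0)
    (hrow : ∀ x, (∑ y, A x y) = 0) :
    (∀ x, (∑ y, ptrans A x y) = 0) ↔ (ptrans A).PosSemidef := by
  refine ⟨posSemidef_of_offDiag_nonpos_of_sum_eq_zero (isSymm_ptrans hsymm)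
    fun _ _ => ptrans_apply_nonpos hoff, fun hpsd => hpsd.sum_eq_zero_of_sum_sum_eq_zero ?_⟩
  rw [sum_sum_ptrans]
  exact Finset.sum_eq_zero fun x _ => hrow x

/-- for `A ∈ S_1^0`, the partial transpose has zero row sums iff it is
positive semidefinite. -/
theorem stmt3 {p q : ℕ} (A : Matrix (Fin p × Fin q) (Fin p × Fin q) ℝ)
    (hsymm : A.IsSymm)
    (hoff : ∀ x y, x ≠ y → A x y ≤ 0)
    (htr : A.trace = 1)
    (hrow : ∀ x, (∑ y, A x y) = 0) :
    (∀ x, (∑ y, ptrans A x y) = 0) ↔ (ptrans A).PosSemidef :=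
  stmt3_general A hsymm hoff hrow
end
end

section
/- Let U be an r×r unitary complex matrix with r ≥ 1, let F be the q×q matrix (q ≥ r) with U as its top-left r×r block and zeros elsewhere, and let D be the q×q diagonal matrix with the r×r identity as its top-left block and zeros elsewhere. Then the 2q×2q block matrix A = (1/(2·tr D)) · [[D, F],[F†, D]] is a density matrix and is separable in ℂ^2 ⊗ ℂ^q. -/
open Matrix BigOperators Kronecker
open scoped ComplexOrder

noncomputable section

lemma toEuclideanLin_mul' {r : ℕ} (M N : Matrix (Fin r) (Fin r) ℂ) :
    Matrix.toEuclideanLin (M * N) =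
      (Matrix.toEuclideanLin M).comp (Matrix.toEuclideanLin N) := by
  refine LinearMap.ext fun x => ?_
  simp [Matrix.toEuclideanLin_apply, Matrix.mulVec_mulVec]


lemma jointEigenbasis {𝕜 E : Type*} [RCLike 𝕜] [NormedAddCommGroup E] [InnerProductSpace 𝕜 E]
    [FiniteDimensional 𝕜 E] {n : ℕ} (hn : Module.finrank 𝕜 E = n)
    {A B : E →ₗ[𝕜] E} (hA : A.IsSymmetric) (hB : B.IsSymmetric) (hAB : Commute A B) :
    ∃ (b : OrthonormalBasis (Fin n) 𝕜 E) (ν μ : Fin n → 𝕜),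
      ∀ k, A (b k) = ν k • b k ∧ B (b k) = μ k • b k := by
  classical
  set V : 𝕜 × 𝕜 → Submodule 𝕜 E :=
    fun i => Module.End.eigenspace A i.2 ⊓ Module.End.eigenspace B i.1 with hV
  have hinternal : DirectSum.IsInternal V :=
    LinearMap.IsSymmetric.directSum_isInternal_of_commute hA hB hAB
  have hindep : iSupIndep V :=
    (DirectSum.isInternal_submodule_iff_iSupIndep_and_iSup_eq_top V).mp hinternal |>.1
  haveI : Fintype {i : 𝕜 × 𝕜 // V i ≠ ⊥} := hindep.fintypeNeBotOfFiniteDimensional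
  have hinternal' : DirectSum.IsInternal (fun i : {i : 𝕜 × 𝕜 // V i ≠ ⊥} => V i) := by
    rw [DirectSum.isInternal_submodule_iff_iSupIndep_and_iSup_eq_top] at hinternal ⊢
    exact ⟨hinternal.1.comp Subtype.coe_injective,
      by rw [iSup_ne_bot_subtype]; exact hinternal.2⟩
  have hofam : OrthogonalFamily 𝕜 (fun i : {i : 𝕜 × 𝕜 // V i ≠ ⊥} => ↥(V i))
      (fun i => (V i).subtypeₗᵢ) :=
    (LinearMap.IsSymmetric.orthogonalFamily_eigenspace_inf_eigenspace hA hB).comp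
      Subtype.coe_injective
  set b := hinternal'.subordinateOrthonormalBasis hn hofam with hb
  set idx := fun k : Fin n =>
    ((hinternal'.subordinateOrthonormalBasisIndex hn k hofam : {i : 𝕜 × 𝕜 // V i ≠ ⊥}) :
      𝕜 × 𝕜) with hidx
  have hmem : ∀ k, (b k : E) ∈ V (idx k) :=
    fun k => hinternal'.subordinateOrthonormalBasis_subordinate hn k hofam
  exact ⟨b, fun k => (idx k).2, fun k => (idx k).1,
    fun k => ⟨Module.End.mem_eigenspace_iff.mp (hmem k).1,
      Module.End.mem_eigenspace_iff.mp (hmem k).2⟩⟩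

set_option maxHeartbeats 1000000 in
lemma unitary_spectral {r : ℕ} (U : Matrix (Fin r) (Fin r) ℂ)
    (hU : U ∈ Matrix.unitaryGroup (Fin r) ℂ) :
    ∃ (w : Fin r → Fin r → ℂ) (μ : Fin r → ℂ),
      (∀ k, μ k * (starRingEnd ℂ) (μ k) = 1) ∧
      (∀ k, (∑ i, w k i * (starRingEnd ℂ) (w k i)) = 1) ∧
      (∀ j l, (∑ k, w k j * (starRingEnd ℂ) (w k l)) = if j = l then 1 else 0) ∧
      (∀ j l, (∑ k, μ k * (w k j * (starRingEnd ℂ) (w k l))) = U j l) ∧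
      (∀ j l, (∑ k, (starRingEnd ℂ) (μ k) * (w k j * (starRingEnd ℂ) (w k l))) = Uᴴ j l) := by
  classical
  have e1 : U * Uᴴ = 1 := by
    simpa [Matrix.star_eq_conjTranspose] using hU.2
  have e2 : Uᴴ * U = 1 := by
    simpa [Matrix.star_eq_conjTranspose] using hU.1
  set MA : Matrix (Fin r) (Fin r) ℂ := U + Uᴴ with hMA
  set MB : Matrix (Fin r) (Fin r) ℂ := Complex.I • (Uᴴ - U) with hMB
  have hMAh : MA.IsHermitian := by
    simp [Matrix.IsHermitian, hMA, Matrix.conjTranspose_add, add_comm]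
  have hMBh : MB.IsHermitian := by
    simp only [Matrix.IsHermitian, hMB, Matrix.conjTranspose_smul, Matrix.conjTranspose_sub,
      Matrix.conjTranspose_conjTranspose, Complex.conj_I, neg_smul, smul_sub,
      Complex.star_def]
    module
  set TA := Matrix.toEuclideanLin MA with hTA
  set TB := Matrix.toEuclideanLin MB with hTB
  have hA : TA.IsSymmetric := (Matrix.isHermitian_iff_isSymmetric).1 hMAh
  have hB : TB.IsSymmetric := (Matrix.isHermitian_iff_isSymmetric).1 hMBh
  have hMcomm : MA * MB = MB * MA := by
    have : (U + Uᴴ) * (Uᴴ - U) = (Uᴴ - U) * (U + Uᴴ) := by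
      rw [add_mul, mul_sub, mul_sub, sub_mul, mul_add, mul_add, e1, e2]
      abel
    simp only [hMA, hMB, Matrix.mul_smul, Matrix.smul_mul]
    rw [this]
  have hcomm : Commute TA TB := by
    unfold Commute SemiconjBy
    rw [Module.End.mul_eq_comp, Module.End.mul_eq_comp, hTA, hTB,
      ← toEuclideanLin_mul', ← toEuclideanLin_mul', hMcomm]
  have hrr : Module.finrank ℂ (EuclideanSpace ℂ (Fin r)) = r := finrank_euclideanSpace_fin
  obtain ⟨b, ν, μ', hbe⟩ := jointEigenbasis hrr hA hB hcomm
  set μ : Fin r → ℂ := fun k => (ν k + Complex.I * μ' k) / 2 with hμ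
  have hbne : ∀ k, (b k : EuclideanSpace ℂ (Fin r)) ≠ 0 := fun k => b.toBasis.ne_zero k
  have heigA : ∀ k, TA (b k) = ν k • (b k) := fun k => (hbe k).1
  have heigB : ∀ k, TB (b k) = μ' k • (b k) := fun k => (hbe k).2
  have hreal2 : ∀ k, (starRingEnd ℂ) (ν k) = ν k := fun k =>
    hA.conj_eigenvalue_eq_self (Module.End.hasEigenvalue_of_hasEigenvector
      ⟨Module.End.mem_eigenspace_iff.mpr (heigA k), hbne k⟩)
  have hreal1 : ∀ k, (starRingEnd ℂ) (μ' k) = μ' k := fun k =>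
    hB.conj_eigenvalue_eq_self (Module.End.hasEigenvalue_of_hasEigenvector
      ⟨Module.End.mem_eigenspace_iff.mpr (heigB k), hbne k⟩)
  -- eigen equations for U and Uᴴ
  have heigA' : ∀ k, Matrix.toEuclideanLin MA (b k) = ν k • (b k) := heigA
  have heigB' : ∀ k, Matrix.toEuclideanLin MB (b k) = μ' k • (b k) := heigB
  have hUb : ∀ k, Matrix.toEuclideanLin U (b k) = μ k • (b k) := by
    intro k
    have h2U : (2 : ℂ) • U = MA + Complex.I • MB := by
      rw [hMA, hMB, smul_smul, Complex.I_mul_I, neg_one_smul]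
      module
    have := congrArg (fun M => Matrix.toEuclideanLin M (b k)) h2U
    simp only [_root_.map_smul, map_add, LinearMap.smul_apply, LinearMap.add_apply] at this
    rw [heigA', heigB', smul_smul] at this
    have h2 : ((2:ℂ)⁻¹ * 2) • Matrix.toEuclideanLin U (b k)
        = (2:ℂ)⁻¹ • (ν k • b k + (Complex.I * μ' k) • b k) := by
      rw [mul_smul]; exact congrArg (fun z => (2:ℂ)⁻¹ • z) this
    rw [inv_mul_cancel₀ (two_ne_zero), one_smul] at h2
    rw [h2, hμ, smul_add, smul_smul, smul_smul, ← add_smul]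
    congr 1
    ring
  have hUHb : ∀ k, Matrix.toEuclideanLin Uᴴ (b k) = (starRingEnd ℂ) (μ k) • (b k) := by
    intro k
    have h2U : (2 : ℂ) • Uᴴ = MA - Complex.I • MB := by
      rw [hMA, hMB, smul_smul, Complex.I_mul_I, neg_one_smul]
      module
    have := congrArg (fun M => Matrix.toEuclideanLin M (b k)) h2U
    simp only [_root_.map_smul, map_sub, LinearMap.smul_apply, LinearMap.sub_apply] at this
    rw [heigA', heigB', smul_smul] at this
    have h2 : ((2:ℂ)⁻¹ * 2) • Matrix.toEuclideanLin Uᴴ (b k)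
        = (2:ℂ)⁻¹ • (ν k • b k - (Complex.I * μ' k) • b k) := by
      rw [mul_smul]; exact congrArg (fun z => (2:ℂ)⁻¹ • z) this
    rw [inv_mul_cancel₀ (two_ne_zero), one_smul] at h2
    rw [h2, smul_sub, smul_smul, smul_smul, ← sub_smul]
    congr 1
    rw [hμ, map_div₀, map_add, _root_.map_mul, hreal1, hreal2, Complex.conj_I, map_ofNat]
    ring
  -- |μ| = 1
  have hμ1 : ∀ k, μ k * (starRingEnd ℂ) (μ k) = 1 := by
    intro k
    have h1 : Matrix.toEuclideanLin (U * Uᴴ) (b k)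
        = (μ k * (starRingEnd ℂ) (μ k)) • (b k) := by
      rw [toEuclideanLin_mul', LinearMap.comp_apply, hUHb, _root_.map_smul, hUb,
        smul_smul, mul_comm]
    rw [e1] at h1
    have h2 : (b k : EuclideanSpace ℂ (Fin r)) = (μ k * (starRingEnd ℂ) (μ k)) • (b k) := by
      rw [← h1]
      simp [Matrix.toEuclideanLin_apply, Matrix.one_mulVec]
    by_contra hne
    have h3 : (μ k * (starRingEnd ℂ) (μ k) - 1) • (b k : EuclideanSpace ℂ (Fin r)) = 0 := by
      rw [sub_smul, one_smul, ← h2, sub_self]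
    rcases smul_eq_zero.mp h3 with h | h
    · exact hne (by linear_combination h)
    · exact hbne k h
  -- coordinates
  set w : Fin r → Fin r → ℂ := fun k i => b k i with hw
  have hortho : ∀ k l, (∑ i, (starRingEnd ℂ) (w k i) * w l i) = if k = l then 1 else 0 := by
    intro k l
    rw [← orthonormal_iff_ite.mp b.orthonormal k l]
    simp [PiLp.inner_apply, RCLike.inner_apply, hw]
    exact Finset.sum_congr rfl fun i _ => mul_comm _ _
  have h2 : ∀ k, (∑ i, w k i * (starRingEnd ℂ) (w k i)) = 1 := by
    intro k
    calc (∑ i, w k i * (starRingEnd ℂ) (w k i))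
        = ∑ i, (starRingEnd ℂ) (w k i) * w k i := by
          exact Finset.sum_congr rfl fun i _ => mul_comm _ _
      _ = 1 := by simpa using hortho k k
  set W : Matrix (Fin r) (Fin r) ℂ := Matrix.of (fun i k => w k i) with hW
  have hWW : Wᴴ * W = 1 := by
    ext k l
    simp only [Matrix.mul_apply, Matrix.conjTranspose_apply, Matrix.one_apply, hW,
      Matrix.of_apply, Complex.star_def]
    rw [hortho k l]
  have hWW' : W * Wᴴ = 1 := mul_eq_one_comm.mp hWW
  have h3 : ∀ j l, (∑ k, w k j * (starRingEnd ℂ) (w k l)) = if j = l then 1 else 0 := by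
    intro j l
    have := congrFun (congrFun hWW' j) l
    simpa [Matrix.mul_apply, Matrix.conjTranspose_apply, Matrix.one_apply, hW,
      Complex.star_def] using this
  have hUw : ∀ k j, (∑ m, U j m * w k m) = μ k * w k j := by
    intro k j
    have := congrArg (fun v : EuclideanSpace ℂ (Fin r) => v j) (hUb k)
    simpa [Matrix.toEuclideanLin_apply,
      Matrix.mulVec, dotProduct, PiLp.smul_apply, smul_eq_mul, hw] using this
  have hUHw : ∀ k j, (∑ m, Uᴴ j m * w k m) = (starRingEnd ℂ) (μ k) * w k j := by
    intro k j
    have := congrArg (fun v : EuclideanSpace ℂ (Fin r) => v j) (hUHb k)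
    simpa [Matrix.toEuclideanLin_apply,
      Matrix.mulVec, dotProduct, PiLp.smul_apply, smul_eq_mul, hw] using this
  have key : ∀ (M : Matrix (Fin r) (Fin r) ℂ) (c : Fin r → ℂ),
      (∀ k j, (∑ m, M j m * w k m) = c k * w k j) →
      ∀ j l, (∑ k, c k * (w k j * (starRingEnd ℂ) (w k l))) = M j l := by
    intro M c hc j l
    have step : ∀ k, c k * (w k j * (starRingEnd ℂ) (w k l))
        = ∑ m, M j m * (w k m * (starRingEnd ℂ) (w k l)) := by
      intro k
      calc c k * (w k j * (starRingEnd ℂ) (w k l))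
          = (c k * w k j) * (starRingEnd ℂ) (w k l) := by ring
        _ = (∑ m, M j m * w k m) * (starRingEnd ℂ) (w k l) := by rw [hc k j]
        _ = ∑ m, M j m * (w k m * (starRingEnd ℂ) (w k l)) := by
            rw [Finset.sum_mul]; exact Finset.sum_congr rfl fun m _ => by ring
    simp_rw [step]
    rw [Finset.sum_comm]
    have h5' : ∀ m, (∑ k, M j m * (w k m * (starRingEnd ℂ) (w k l)))
        = M j m * (if m = l then 1 else 0) := by
      intro m; rw [← Finset.mul_sum, h3]
    simp_rw [h5']
    simp
  exact ⟨w, μ, hμ1, h2, h3, key U μ hUw, key Uᴴ (fun k => (starRingEnd ℂ) (μ k)) hUHw⟩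

lemma sum_embed {r q : ℕ} (hq : r ≤ q) (f : Fin r → ℂ) :
    (∑ j : Fin q, if h : (j : ℕ) < r then f ⟨j, h⟩ else 0) = ∑ i : Fin r, f i := by
  rw [Fin.sum_univ_eq_sum_range (fun n => if h : n < r then f ⟨n, h⟩ else 0) q]
  rw [← Finset.sum_subset (Finset.range_subset_range.mpr hq)
    (fun x _ hx => dif_neg (by simpa using hx))]
  rw [← Fin.sum_univ_eq_sum_range (fun n => if h : n < r then f ⟨n, h⟩ else 0) r]
  exact Finset.sum_congr rfl fun i _ => by rw [dif_pos i.isLt]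

lemma outer_posSemidef {n : Type*} [Fintype n] (v : n → ℂ) :
    (Matrix.of fun i j => v i * (starRingEnd ℂ) (v j)).PosSemidef := by
  rw [Matrix.posSemidef_iff_dotProduct_mulVec]
  constructor
  · ext i j
    simp only [Matrix.conjTranspose_apply, Matrix.of_apply, Complex.star_def, _root_.map_mul,
      Complex.conj_conj]
    ring
  · intro x
    have key : (star x) ⬝ᵥ ((Matrix.of fun i j => v i * (starRingEnd ℂ) (v j)) *ᵥ x)
        = (∑ i, (starRingEnd ℂ) (x i) * v i) *
          star (∑ i, (starRingEnd ℂ) (x i) * v i) := by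
      simp only [dotProduct, Matrix.mulVec, Pi.star_apply, Matrix.of_apply,
        Complex.star_def, map_sum, _root_.map_mul, Complex.conj_conj, Finset.mul_sum,
        Finset.sum_mul]
      rw [Finset.sum_comm]
      exact Finset.sum_congr rfl fun i _ => Finset.sum_congr rfl fun j _ => by ring
    rw [key]
    exact mul_star_self_nonneg _

lemma posSemidef_real_smul {n : Type*} [Fintype n] {M : Matrix n n ℂ} (hM : M.PosSemidef)
    {c : ℝ} (hc : 0 ≤ c) : ((c : ℂ) • M).PosSemidef := by
  rw [Matrix.posSemidef_iff_dotProduct_mulVec]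
  constructor
  · show ((c : ℂ) • M)ᴴ = (c : ℂ) • M
    rw [Matrix.conjTranspose_smul, hM.1]
    norm_num [Complex.conj_ofReal]
  · intro x
    rw [Matrix.smul_mulVec, dotProduct_smul, smul_eq_mul]
    exact mul_nonneg (Complex.zero_le_real.mpr hc) (hM.dotProduct_mulVec_nonneg x)

/-- for a unitary r×r matrix U embedded as the top-left block F of a q×q
matrix, with D the corresponding partial identity, the block matrix
(1/(2 tr D)) [[D, F],[F†, D]] is a separable density matrix in ℂ² ⊗ ℂ^q. -/
theorem stmt5 {r q : ℕ} (hr : 1 ≤ r) (hq : r ≤ q)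
    (U : Matrix (Fin r) (Fin r) ℂ) (hU : U ∈ Matrix.unitaryGroup (Fin r) ℂ)
    (F D : Matrix (Fin q) (Fin q) ℂ)
    (hF : ∀ j l : Fin q, F j l =
      if h : (j : ℕ) < r ∧ (l : ℕ) < r then U ⟨j, h.1⟩ ⟨l, h.2⟩ else 0)
    (hD : ∀ j l : Fin q, D j l = if j = l ∧ (j : ℕ) < r then 1 else 0)
    (A : Matrix (Fin 2 × Fin q) (Fin 2 × Fin q) ℂ)
    (hA : A = (1 / (2 * D.trace)) • twoBlock D F Fᴴ D) :
    IsDensityMatrix A ∧ SeparableState A := by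
  classical
  obtain ⟨w, μ, hμ1, h2, h3, h4, h5⟩ := unitary_spectral U hU
  have hr0 : (r : ℂ) ≠ 0 := Nat.cast_ne_zero.mpr (by omega)
  -- the components of the separable decomposition
  set y : Fin r → Fin q → ℂ := fun k j => if h : (j : ℕ) < r then w k ⟨j, h⟩ else 0 with hy
  set s2 : ℂ := (((Real.sqrt 2)⁻¹ : ℝ) : ℂ) with hs2def
  set xx : Fin r → Fin 2 → ℂ := fun k i => if i = 0 then 1 else (starRingEnd ℂ) (μ k) with hxx
  set vρ : Fin r → Fin 2 → ℂ := fun k i => s2 * xx k i with hvρ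
  set ρ : Fin r → Matrix (Fin 2) (Fin 2) ℂ :=
    fun k => Matrix.of fun i i' => vρ k i * (starRingEnd ℂ) (vρ k i') with hρdef
  set η : Fin r → Matrix (Fin q) (Fin q) ℂ :=
    fun k => Matrix.of fun j l => y k j * (starRingEnd ℂ) (y k l) with hηdef
  have hs2 : s2 * (starRingEnd ℂ) s2 = 1/2 := by
    rw [hs2def, Complex.conj_ofReal, ← Complex.ofReal_mul, ← mul_inv,
      Real.mul_self_sqrt (by norm_num)]
    norm_num
  have hρ : ∀ k i i', ρ k i i' = (1/2) * (xx k i * (starRingEnd ℂ) (xx k i')) := by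
    intro k i i'
    show (s2 * xx k i) * (starRingEnd ℂ) (s2 * xx k i') = _
    rw [_root_.map_mul]
    calc (s2 * xx k i) * ((starRingEnd ℂ) s2 * (starRingEnd ℂ) (xx k i'))
        = (s2 * (starRingEnd ℂ) s2) * (xx k i * (starRingEnd ℂ) (xx k i')) := by ring
      _ = _ := by rw [hs2]
  have hxx0 : ∀ k, xx k 0 = 1 := fun k => rfl
  have hxx1 : ∀ k, xx k 1 = (starRingEnd ℂ) (μ k) := fun k => rfl
  -- traces of the components
  have hρtr : ∀ k, (ρ k).trace = 1 := by
    intro k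
    rw [Matrix.trace_fin_two, hρ, hρ, hxx0, hxx1]
    have := hμ1 k
    simp only [_root_.map_one, mul_one, Complex.conj_conj]
    linear_combination ((1:ℂ)/2) * (hμ1 k)
  have hηsum : ∀ k j, y k j * (starRingEnd ℂ) (y k j)
      = if h : (j : ℕ) < r then w k ⟨j, h⟩ * (starRingEnd ℂ) (w k ⟨j, h⟩) else 0 := by
    intro k j
    by_cases h : (j : ℕ) < r <;> simp [hy, h]
  have hηtr : ∀ k, (η k).trace = 1 := by
    intro k
    show (∑ j, y k j * (starRingEnd ℂ) (y k j)) = 1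
    rw [Finset.sum_congr rfl fun j _ => hηsum k j,
      sum_embed hq (fun i => w k i * (starRingEnd ℂ) (w k i)), h2]
  have hρd : ∀ k, IsDensityMatrix (ρ k) :=
    fun k => ⟨(outer_posSemidef (vρ k)).1, outer_posSemidef (vρ k), hρtr k⟩
  have hηd : ∀ k, IsDensityMatrix (η k) :=
    fun k => ⟨(outer_posSemidef (y k)).1, outer_posSemidef (y k), hηtr k⟩
  -- the three block identities
  have C1 : ∀ j l, (∑ k, y k j * (starRingEnd ℂ) (y k l)) = D j l := by
    intro j l
    rw [hD]
    by_cases hj : (j : ℕ) < r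
    · by_cases hl : (l : ℕ) < r
      · simp only [hy, dif_pos hj, dif_pos hl]
        rw [h3 ⟨j, hj⟩ ⟨l, hl⟩]
        simp [Fin.ext_iff, hj]
      · have : ¬(j = l ∧ (j : ℕ) < r) := fun ⟨hjl, _⟩ => hl (hjl ▸ hj)
        simp [hy, dif_neg hl, this]
    · have : ¬(j = l ∧ (j : ℕ) < r) := fun ⟨_, hjr⟩ => hj hjr
      simp [hy, dif_neg hj, this]
  have C2 : ∀ j l, (∑ k, μ k * (y k j * (starRingEnd ℂ) (y k l))) = F j l := by
    intro j l
    rw [hF]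
    by_cases hj : (j : ℕ) < r
    · by_cases hl : (l : ℕ) < r
      · simp only [hy, dif_pos hj, dif_pos hl]
        rw [h4 ⟨j, hj⟩ ⟨l, hl⟩, dif_pos ⟨hj, hl⟩]
      · have : ¬((j : ℕ) < r ∧ (l : ℕ) < r) := fun hc => hl hc.2
        simp [hy, dif_neg hl, this]
    · have : ¬((j : ℕ) < r ∧ (l : ℕ) < r) := fun hc => hj hc.1
      simp [hy, dif_neg hj, this]
  have C3 : ∀ j l, (∑ k, (starRingEnd ℂ) (μ k) * (y k j * (starRingEnd ℂ) (y k l)))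
      = Fᴴ j l := by
    intro j l
    rw [Matrix.conjTranspose_apply, hF]
    by_cases hj : (j : ℕ) < r
    · by_cases hl : (l : ℕ) < r
      · simp only [hy, dif_pos hj, dif_pos hl]
        have := h5 ⟨j, hj⟩ ⟨l, hl⟩
        rw [Matrix.conjTranspose_apply] at this
        rw [this, dif_pos ⟨hl, hj⟩]
      · have : ¬((l : ℕ) < r ∧ (j : ℕ) < r) := fun hc => hl hc.1
        simp [hy, dif_neg hl, this]
    · have : ¬((l : ℕ) < r ∧ (j : ℕ) < r) := fun hc => hj hc.2
      simp [hy, dif_neg hj, this]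
  -- trace of D
  have hDtr : D.trace = (r : ℂ) := by
    show (∑ j, D j j) = (r : ℂ)
    have : ∀ j : Fin q, D j j = if h : (j : ℕ) < r then (1 : ℂ) else 0 := by
      intro j; rw [hD]; by_cases h : (j : ℕ) < r <;> simp [h]
    rw [Finset.sum_congr rfl fun j _ => this j, sum_embed hq (fun _ => (1 : ℂ))]
    simp
  -- the decomposition
  have hAdec : A = ∑ k, (((1/(r:ℝ) : ℝ)) : ℂ) • (ρ k ⊗ₖ η k) := by
    have hcoef : (((1/(r:ℝ) : ℝ)) : ℂ) = 1/(r:ℂ) := by push_cast; ring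
    apply Matrix.ext
    rintro ⟨i, j⟩ ⟨i', l⟩
    rw [hA]
    simp only [Matrix.smul_apply, Matrix.sum_apply, Matrix.kroneckerMap_apply, smul_eq_mul,
      hcoef, hDtr]
    have hsummand : ∀ k, (1/(r:ℂ)) * (ρ k i i' * η k j l)
        = (1/(2*(r:ℂ))) * ((xx k i * (starRingEnd ℂ) (xx k i'))
            * (y k j * (starRingEnd ℂ) (y k l))) := by
      intro k
      rw [hρ]
      show _ = (1/(2*(r:ℂ))) * ((xx k i * (starRingEnd ℂ) (xx k i'))
        * (y k j * (starRingEnd ℂ) (y k l)))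
      rw [show η k j l = y k j * (starRingEnd ℂ) (y k l) from rfl]
      ring
    rw [Finset.sum_congr rfl fun k _ => hsummand k, ← Finset.mul_sum]
    congr 1
    fin_cases i <;> fin_cases i' <;>
      simp only [twoBlock, Fin.zero_eta, Fin.mk_one, Fin.isValue, one_ne_zero, if_true,
        if_false, ite_true, ite_false, reduceIte, hxx0, hxx1, _root_.map_one, one_mul,
        mul_one, Complex.conj_conj]
    · exact (C1 j l).symm
    · exact (C2 j l).symm
    · exact (C3 j l).symm
    · rw [Finset.sum_congr rfl (fun k _ => by
        rw [mul_comm ((starRingEnd ℂ) (μ k)) (μ k), hμ1, one_mul] :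
        ∀ k ∈ Finset.univ, ((starRingEnd ℂ) (μ k) * μ k) * (y k j * (starRingEnd ℂ) (y k l))
          = y k j * (starRingEnd ℂ) (y k l))]
      exact (C1 j l).symm
  -- kronecker products are outer products
  have hkron : ∀ k, (ρ k ⊗ₖ η k) = Matrix.of
      (fun a b : Fin 2 × Fin q =>
        (vρ k a.1 * y k a.2) * (starRingEnd ℂ) (vρ k b.1 * y k b.2)) := by
    intro k
    apply Matrix.ext
    rintro ⟨i, j⟩ ⟨i', l⟩
    simp only [Matrix.kroneckerMap_apply, Matrix.of_apply, hρdef, hηdef, _root_.map_mul]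
    ring
  have hPSD : A.PosSemidef := by
    rw [hAdec]
    refine Finset.sum_induction _ Matrix.PosSemidef (fun a b ha hb => ha.add hb)
      (Matrix.PosSemidef.zero) (fun k _ => ?_)
    rw [hkron k]
    exact posSemidef_real_smul (outer_posSemidef _) (by positivity)
  have hsumc : (∑ _k : Fin r, (1/(r:ℝ) : ℝ)) = 1 := by
    rw [Finset.sum_const, Finset.card_univ, Fintype.card_fin, nsmul_eq_mul]
    field_simp
  have htrA : A.trace = 1 := by
    rw [hAdec, Matrix.trace_sum]
    have : ∀ k : Fin r, ((((1/(r:ℝ) : ℝ)) : ℂ) • (ρ k ⊗ₖ η k)).trace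
        = (((1/(r:ℝ) : ℝ)) : ℂ) := by
      intro k
      rw [Matrix.trace_smul, Matrix.trace_kronecker, hρtr, hηtr]
      simp
    rw [Finset.sum_congr rfl fun k _ => this k]
    rw [← Complex.ofReal_sum]
    rw [hsumc]
    simp
  refine ⟨⟨hPSD.1, hPSD, htrA⟩, r, (fun _ => (1/(r:ℝ) : ℝ)), ρ, η,
    fun k => by positivity, hsumc, hρd, hηd, hAdec⟩
end
end

section
/- Let C be a q×q simple circuit matrix and let D be the q×q diagonal matrix whose i-th diagonal entry is the i-th row sum of C. Then the 2q×2q block matrix A = (1/(2·tr D)) · [[D, −C],[−Cᵀ, D]] is a density matrix and is separable in ℂ^2 ⊗ ℂ^q. -/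
/-!
On the support `{f m}` of the circuit, `C` is the cyclic shift, which the characters `ψ` of the
cyclic group diagonalise: with `v_ψ = Σ_m ψ(m) e_{f m}` one gets
`D = (1/k) Σ_ψ v_ψ v_ψ*` and `C = (1/k) Σ_ψ ψ(1) v_ψ v_ψ*`. Hence
`[[D, -C], [-Cᵀ, D]] = (1/k) Σ_ψ [[1, -ψ(1)], [-conj ψ(1), 1]] ⊗ v_ψ v_ψ*`, and since `|ψ(1)| = 1`
each `2 × 2` factor is twice a pure state, so `A` is a uniform mixture of product states.
-/

open Matrix BigOperators Kronecker
open scoped ComplexOrder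

noncomputable section

open Function

section DensityMatrix

variable {n : Type*} [Fintype n]

lemma isDensityMatrix_inv_smul_vecMulVec {v : n → ℂ} {c : ℝ} (hc : 0 < c)
    (hv : star v ⬝ᵥ v = c) : IsDensityMatrix ((c : ℂ)⁻¹ • vecMulVec v (star v)) := by
  have hpsd : ((c : ℂ)⁻¹ • vecMulVec v (star v)).PosSemidef :=
    (posSemidef_vecMulVec_self_star v).smul (by simpa [Complex.zero_le_real] using hc.le)
  refine ⟨hpsd.1, hpsd, ?_⟩
  rw [trace_smul, trace_vecMulVec, dotProduct_comm, hv, smul_eq_mul,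
    inv_mul_cancel₀ (by exact_mod_cast hc.ne')]

lemma IsDensityMatrix.kronecker {m : Type*} [Fintype m] {ρ : Matrix n n ℂ} {η : Matrix m m ℂ}
    (hρ : IsDensityMatrix ρ) (hη : IsDensityMatrix η) : IsDensityMatrix (ρ ⊗ₖ η) :=
  have hpsd := hρ.2.1.kronecker hη.2.1
  ⟨hpsd.1, hpsd, by rw [trace_kronecker, hρ.2.2, hη.2.2, mul_one]⟩

lemma isDensityMatrix_sum_smul {ι : Type*} [Fintype ι] {c : ι → ℝ} {ρ : ι → Matrix n n ℂ}
    (hc : ∀ i, 0 ≤ c i) (hc₁ : ∑ i, c i = 1) (hρ : ∀ i, IsDensityMatrix (ρ i)) :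
    IsDensityMatrix (∑ i, (c i : ℂ) • ρ i) := by
  have hpsd : (∑ i, (c i : ℂ) • ρ i).PosSemidef :=
    posSemidef_sum _ fun i _ => (hρ i).2.1.smul (Complex.zero_le_real.mpr (hc i))
  refine ⟨hpsd.1, hpsd, ?_⟩
  simp only [trace_sum, trace_smul, (hρ _).2.2, smul_eq_mul, mul_one]
  exact_mod_cast hc₁

end DensityMatrix

lemma SeparableState.isDensityMatrix {p q : ℕ} {A : Matrix (Fin p × Fin q) (Fin p × Fin q) ℂ}
    (hA : SeparableState A) : IsDensityMatrix A := by
  obtain ⟨m, c, ρ, η, hc, hc₁, hρ, hη, rfl⟩ := hA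
  exact isDensityMatrix_sum_smul hc hc₁ fun i => (hρ i).kronecker (hη i)

lemma separableState_sum_smul_kronecker {p q : ℕ} {ι : Type*} [Fintype ι] {c : ι → ℝ}
    {ρ : ι → Matrix (Fin p) (Fin p) ℂ} {η : ι → Matrix (Fin q) (Fin q) ℂ}
    (hc : ∀ i, 0 ≤ c i) (hc₁ : ∑ i, c i = 1) (hρ : ∀ i, IsDensityMatrix (ρ i))
    (hη : ∀ i, IsDensityMatrix (η i)) :
    SeparableState (∑ i, (c i : ℂ) • (ρ i ⊗ₖ η i)) := by
  let e := (Fintype.equivFin ι).symm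
  refine ⟨Fintype.card ι, c ∘ e, ρ ∘ e, η ∘ e, fun i => hc _, ?_, fun i => hρ _, fun i => hη _, ?_⟩
  · rw [← hc₁]; exact e.sum_comp c
  · exact (e.sum_comp fun i => (c i : ℂ) • (ρ i ⊗ₖ η i)).symm

section TwoBlock

variable {q : ℕ}

lemma sum_kronecker_eq_twoBlock {α ι : Type*} [NonUnitalNonAssocSemiring α] [Fintype ι]
    (R : ι → Matrix (Fin 2) (Fin 2) α) (η : ι → Matrix (Fin q) (Fin q) α) :
    ∑ i, R i ⊗ₖ η i = twoBlock (∑ i, R i 0 0 • η i) (∑ i, R i 0 1 • η i)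
      (∑ i, R i 1 0 • η i) (∑ i, R i 1 1 • η i) := by
  ext ⟨a, x⟩ ⟨b, y⟩
  fin_cases a <;> fin_cases b <;> simp [twoBlock, Matrix.sum_apply]

lemma twoBlock_map {α β : Type*} (A₁₁ A₁₂ A₂₁ A₂₂ : Matrix (Fin q) (Fin q) α) (g : α → β) :
    (twoBlock A₁₁ A₁₂ A₂₁ A₂₂).map g =
      twoBlock (A₁₁.map g) (A₁₂.map g) (A₂₁.map g) (A₂₂.map g) := by
  ext a b
  simp only [map_apply, twoBlock]
  split_ifs <;> rfl

lemma smul_twoBlock {α R : Type*} [SMul R α] (c : R) (A₁₁ A₁₂ A₂₁ A₂₂ : Matrix (Fin q) (Fin q) α) :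
    c • twoBlock A₁₁ A₁₂ A₂₁ A₂₂ = twoBlock (c • A₁₁) (c • A₁₂) (c • A₂₁) (c • A₂₂) := by
  ext a b
  simp only [Matrix.smul_apply, twoBlock]
  split_ifs <;> rfl

end TwoBlock

def phaseState (z : ℂ) : Matrix (Fin 2) (Fin 2) ℂ :=
  (2 : ℂ)⁻¹ • vecMulVec ![1, -star z] (star ![1, -star z])

section PhaseState

variable {z : ℂ}

lemma phaseState_isDensityMatrix (hz : ‖z‖ = 1) : IsDensityMatrix (phaseState z) := by
  have hz' : starRingEnd ℂ z * z = 1 := by simp [Complex.conj_mul', hz]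
  refine isDensityMatrix_inv_smul_vecMulVec (c := 2) two_pos ?_
  simp [dotProduct, Fin.sum_univ_two, mul_comm z, hz']
  norm_num

lemma phaseState_eq (hz : ‖z‖ = 1) :
    phaseState z = !![2⁻¹, -(2⁻¹ * z); -(2⁻¹ * star z), 2⁻¹] := by
  have hz' : starRingEnd ℂ z * z = 1 := by simp [Complex.conj_mul', hz]
  ext a b
  simp only [phaseState, Matrix.smul_apply, vecMulVec_apply]
  fin_cases a <;> fin_cases b <;> simp [hz']

end PhaseState

lemma separableState_twoBlock {q : ℕ} {ι : Type*} [Fintype ι] [Nonempty ι] (z : ι → ℂ)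
    (hz : ∀ i, ‖z i‖ = 1) (η : ι → Matrix (Fin q) (Fin q) ℂ)
    (hη : ∀ i, IsDensityMatrix (η i)) :
    SeparableState ((2 * Fintype.card ι : ℂ)⁻¹ • twoBlock (∑ i, η i) (-∑ i, z i • η i)
      (-∑ i, star (z i) • η i) (∑ i, η i)) := by
  have hcard : (Fintype.card ι : ℝ) ≠ 0 := Nat.cast_ne_zero.mpr Fintype.card_ne_zero
  have hdecomp : (2 * Fintype.card ι : ℂ)⁻¹ • twoBlock (∑ i, η i) (-∑ i, z i • η i)
      (-∑ i, star (z i) • η i) (∑ i, η i) =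
      ∑ i, (((Fintype.card ι : ℝ)⁻¹ : ℝ) : ℂ) • (phaseState (z i) ⊗ₖ η i) := by
    simp_rw [← smul_kronecker, sum_kronecker_eq_twoBlock, smul_twoBlock, Matrix.smul_apply,
      phaseState_eq (hz _)]
    simp [Finset.smul_sum, smul_smul, mul_assoc, mul_comm, mul_left_comm]
  rw [hdecomp]
  refine separableState_sum_smul_kronecker (fun _ => by positivity) ?_
    (fun i => phaseState_isDensityMatrix (hz i)) hη
  simp [hcard]

section TranslationMatrix

variable {G β R : Type*} [AddCommGroup G] {f : G → β}

open Classical in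
/-- For `G = Fin k` and `a = 1` this is the simple circuit matrix through `f 0, …, f (k - 1)`;
for `a = 0` it is the diagonal projection onto the range of `f`. -/
def translationMatrix (f : G → β) (R : Type*) [Zero R] [One R] (a : G) : Matrix β β R :=
  of fun x y => if ∃ m, x = f m ∧ y = f (m + a) then 1 else 0

lemma translationMatrix_transpose [Zero R] [One R] (a : G) :
    (translationMatrix f R a)ᵀ = translationMatrix f R (-a) := by
  ext x y
  simp only [transpose_apply, translationMatrix, of_apply]
  congr 1
  exact propext ⟨fun ⟨m, hy, hx⟩ => ⟨m + a, hx, by simpa using hy⟩,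
    fun ⟨m, hx, hy⟩ => ⟨m + -a, hy, by simpa using hx⟩⟩

lemma translationMatrix_map {S : Type*} [Zero R] [One R] [Zero S] [One S] (g : R → S)
    (h₀ : g 0 = 0) (h₁ : g 1 = 1) (a : G) :
    (translationMatrix f R a).map g = translationMatrix f S a := by
  ext x y
  simp only [map_apply, translationMatrix, of_apply]
  split_ifs <;> assumption

lemma translationMatrix_zero [DecidableEq β] [Zero R] [One R] :
    translationMatrix f R 0 = diagonal ((Set.range f).indicator 1) := by
  ext x y
  simp only [translationMatrix, of_apply, add_zero, diagonal_apply]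
  by_cases hxy : x = y
  · subst hxy
    by_cases hx : x ∈ Set.range f
    · obtain ⟨m, rfl⟩ := hx
      simp
    · simp only [if_true, Set.indicator_of_notMem hx]
      exact if_neg fun ⟨m, hm, _⟩ => hx ⟨m, hm.symm⟩
  · rw [if_neg hxy]
    exact if_neg fun ⟨m, hx, hy⟩ => hxy (by rw [hx, hy, add_zero])

variable [Fintype β] [AddCommMonoidWithOne R]

lemma sum_translationMatrix_apply (hf : Injective f) (a : G) (x : β) :
    ∑ y, translationMatrix f R a x y = (Set.range f).indicator 1 x := by
  classical
  by_cases hx : x ∈ Set.range f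
  · obtain ⟨m, rfl⟩ := hx
    have hrow : ∀ y, (∃ m', f m = f m' ∧ y = f (m' + a)) ↔ y = f (m + a) := fun y =>
      ⟨fun ⟨m', hm, hy⟩ => by rwa [hf hm], fun hy => ⟨m, rfl, hy⟩⟩
    simp only [translationMatrix, of_apply, hrow]
    simp
  · rw [Set.indicator_of_notMem hx]
    exact Finset.sum_eq_zero fun y _ => if_neg fun ⟨m, hm, _⟩ => hx ⟨m, hm.symm⟩

lemma trace_translationMatrix_zero [Fintype G] (hf : Injective f) :
    trace (translationMatrix f R (0 : G)) = Fintype.card G := by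
  rw [trace, ← Fintype.sum_of_injective f hf (fun _ => 1)]
  · simp
  · intro x hx
    exact if_neg fun ⟨m, hm, _⟩ => hx ⟨m, hm.symm⟩
  · intro m
    exact (if_pos ⟨m, rfl, by rw [add_zero]⟩).symm

end TranslationMatrix

section Fourier

variable {G β : Type*} [AddCommGroup G] [Fintype G] {f : G → β}

lemma star_extend_dotProduct_extend [Fintype β] (hf : Injective f) (ψ : AddChar G ℂ) :
    star (extend f ψ 0) ⬝ᵥ extend f ψ 0 = Fintype.card G := by
  rw [dotProduct, ← Fintype.sum_of_injective f hf (fun _ => 1)]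
  · simp
  · intro x hx
    simp [extend_apply' _ _ _ fun ⟨m, hm⟩ => hx ⟨m, hm⟩]
  · intro m
    rw [Pi.star_apply, hf.extend_apply, Complex.star_def, ← AddChar.map_neg_eq_conj,
      ← AddChar.map_add_eq_mul, neg_add_cancel, AddChar.map_zero_eq_one]

lemma sum_addChar_smul_vecMulVec_extend (hf : Injective f) (a : G) :
    ∑ ψ : AddChar G ℂ, ψ a • vecMulVec (extend f ψ 0) (star (extend f ψ 0)) =
      (Fintype.card G : ℂ) • translationMatrix f ℂ a := by
  classical
  ext x y
  simp only [Matrix.sum_apply, Matrix.smul_apply, vecMulVec_apply, Pi.star_apply, smul_eq_mul,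
    translationMatrix, of_apply]
  by_cases hx : ∃ m, f m = x
  swap
  · rw [if_neg fun ⟨m, hm, _⟩ => hx ⟨m, hm.symm⟩]
    simp [extend_apply' _ _ _ hx]
  obtain ⟨m, rfl⟩ := hx
  by_cases hy : ∃ n, f n = y
  swap
  · rw [if_neg fun ⟨m', _, hm'⟩ => hy ⟨m' + a, hm'.symm⟩]
    simp [extend_apply' _ _ _ hy]
  obtain ⟨n, rfl⟩ := hy
  have hchar : ∀ ψ : AddChar G ℂ, ψ a * (ψ m * star (ψ n)) = ψ (a + m - n) := by
    intro ψ
    rw [sub_eq_add_neg, AddChar.map_add_eq_mul, AddChar.map_add_eq_mul,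
      AddChar.map_neg_eq_conj, Complex.star_def]
    ring
  simp only [hf.extend_apply, hchar, AddChar.sum_apply_eq_ite]
  have hcyc : (∃ m', f m = f m' ∧ f n = f (m' + a)) ↔ a + m - n = 0 := by
    refine ⟨fun ⟨m', hm, hn⟩ => ?_, fun h => ⟨m, rfl, by rw [← sub_eq_zero.mp h, add_comm]⟩⟩
    rw [hf hm, hf hn]
    abel
  simp [hcyc]

end Fourier

lemma separableState_twoBlock_translationMatrix {G : Type*} [AddCommGroup G] [Fintype G] {q : ℕ}
    {f : G → Fin q} (hf : Injective f) (a : G) :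
    SeparableState ((2 * Fintype.card G : ℂ)⁻¹ • twoBlock (translationMatrix f ℂ 0)
      (-translationMatrix f ℂ a) (-translationMatrix f ℂ (-a)) (translationMatrix f ℂ 0)) := by
  let η : AddChar G ℂ → Matrix (Fin q) (Fin q) ℂ := fun ψ =>
    ((Fintype.card G : ℝ) : ℂ)⁻¹ • vecMulVec (extend f ψ 0) (star (extend f ψ 0))
  have hη : ∀ ψ, IsDensityMatrix (η ψ) := fun ψ =>
    isDensityMatrix_inv_smul_vecMulVec (by positivity) (star_extend_dotProduct_extend hf ψ)
  have hsum : ∀ b, ∑ ψ, ψ b • η ψ = translationMatrix f ℂ b := by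
    intro b
    simp only [η, smul_comm (_ : ℂ) ((Fintype.card G : ℝ) : ℂ)⁻¹]
    rw [← Finset.smul_sum, sum_addChar_smul_vecMulVec_extend hf, smul_smul,
      Complex.ofReal_natCast, inv_mul_cancel₀ (Nat.cast_ne_zero.mpr Fintype.card_ne_zero), one_smul]
  have h := separableState_twoBlock (fun ψ : AddChar G ℂ => ψ a) (fun ψ => ψ.norm_apply a) η hη
  have hsum₀ : ∑ ψ, η ψ = translationMatrix f ℂ 0 := by simpa using hsum 0
  simpa only [AddChar.card_eq, Complex.star_def, ← AddChar.map_neg_eq_conj, hsum, hsum₀] using h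

lemma IsSimpleCircuit.exists_eq_translationMatrix {q : ℕ} {C : Matrix (Fin q) (Fin q) ℝ}
    (hC : IsSimpleCircuit C) :
    ∃ (n : ℕ) (f : Fin (n + 1) → Fin q), Injective f ∧ C = translationMatrix f ℝ 1 := by
  obtain ⟨k, hk, f, hf, hCf⟩ := hC
  obtain ⟨n, rfl⟩ := Nat.exists_eq_add_one_of_ne_zero hk.ne'
  have hsucc : ∀ m : Fin (n + 1),
      (⟨((m : ℕ) + 1) % (n + 1), Nat.mod_lt _ hk⟩ : Fin (n + 1)) = m + 1 :=
    fun m => Fin.ext (by simp [Fin.val_add])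
  refine ⟨n, f, hf, ?_⟩
  ext a b
  rw [hCf, translationMatrix, of_apply]
  simp only [hsucc]
  congr

/-- for a simple circuit matrix C with row-sum diagonal D, the block
matrix (1/(2 tr D)) [[D, −C],[−Cᵀ, D]] is a separable density matrix in ℂ² ⊗ ℂ^q. -/
theorem stmt6 {q : ℕ} (C : Matrix (Fin q) (Fin q) ℝ) (hC : IsSimpleCircuit C)
    (D : Matrix (Fin q) (Fin q) ℝ)
    (hD : D = Matrix.diagonal (fun i => ∑ j, C i j))
    (A : Matrix (Fin 2 × Fin q) (Fin 2 × Fin q) ℝ)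
    (hA : A = (1 / (2 * D.trace)) • twoBlock D (-C) (-Cᵀ) D) :
    IsDensityMatrix (A.map (fun x => (x : ℂ))) ∧ SeparableStateR A := by
  obtain ⟨n, f, hf, rfl⟩ := hC.exists_eq_translationMatrix
  rw [funext (sum_translationMatrix_apply hf 1), ← translationMatrix_zero] at hD
  have hsep : SeparableStateR A := by
    rw [SeparableStateR, hA, hD, trace_translationMatrix_zero hf, translationMatrix_transpose]
    simp only [Matrix.map_smul' _ _ _ Complex.ofReal_mul, twoBlock_map,
      Matrix.map_neg _ Complex.ofReal_neg,
      translationMatrix_map _ Complex.ofReal_zero Complex.ofReal_one]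
    convert separableState_twoBlock_translationMatrix hf (1 : Fin (n + 1)) using 2
    push_cast
    ring
  exact ⟨hsep.isDensityMatrix, hsep⟩
end
end

section
/- Let A be a real symmetric matrix indexed by (Fin p × Fin q) with nonnegative row sums, nonpositive off-diagonal entries, and trace 1 (i.e., A ∈ S_1). For i, k ∈ Fin p, let A^{i,k} denote the q×q block with entries (A^{i,k})_{j,l} = A_{(i,j),(k,l)}. If every block A^{i,k} is line sum symmetric, then A is separable in ℂ^p ⊗ ℂ^q. -/
open Matrix BigOperators Kronecker
open scoped ComplexOrder

noncomputable section

namespace Stmt10Aux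

open Complex

/-- product vector -/
def pv {p q : ℕ} (v : Fin p → ℂ) (w : Fin q → ℂ) : Fin p × Fin q → ℂ := fun x => v x.1 * w x.2

/-- rank one outer product -/
def outer {n : Type*} (u : n → ℂ) : Matrix n n ℂ := Matrix.of fun x y => u x * (starRingEnd ℂ) (u y)

def SepCone {p q : ℕ} (M : Matrix (Fin p × Fin q) (Fin p × Fin q) ℂ) : Prop :=
  ∃ (m : ℕ) (v : Fin m → Fin p → ℂ) (w : Fin m → Fin q → ℂ),
    M = ∑ t, outer (pv (v t) (w t))

lemma sepCone_zero {p q : ℕ} : SepCone (0 : Matrix (Fin p × Fin q) (Fin p × Fin q) ℂ) :=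
  ⟨0, Fin.elim0, Fin.elim0, by simp⟩

lemma sepCone_add {p q : ℕ} {M N : Matrix (Fin p × Fin q) (Fin p × Fin q) ℂ}
    (hM : SepCone M) (hN : SepCone N) : SepCone (M + N) := by
  obtain ⟨m1, v1, w1, h1⟩ := hM
  obtain ⟨m2, v2, w2, h2⟩ := hN
  refine ⟨m1 + m2, Fin.append v1 v2, Fin.append w1 w2, ?_⟩
  rw [Fin.sum_univ_add]
  simp only [Fin.append_left, Fin.append_right]
  rw [h1, h2]

lemma sepCone_smul {p q : ℕ} {M : Matrix (Fin p × Fin q) (Fin p × Fin q) ℂ}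
    (c : ℝ) (hc : 0 ≤ c) (hM : SepCone M) : SepCone ((c : ℂ) • M) := by
  obtain ⟨m, v, w, h⟩ := hM
  refine ⟨m, fun t a => (Real.sqrt c : ℂ) * v t a, w, ?_⟩
  rw [h, Finset.smul_sum]
  refine Finset.sum_congr rfl fun t _ => ?_
  ext x y
  simp only [Matrix.smul_apply, outer, pv, Matrix.of_apply, _root_.map_mul, Complex.conj_ofReal,
    smul_eq_mul]
  have h2 : ((Real.sqrt c : ℂ)) * ((Real.sqrt c : ℂ)) = (c : ℂ) := by
    norm_cast
    exact Real.mul_self_sqrt hc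
  linear_combination (-(v t x.1 * w t x.2 * ((starRingEnd ℂ) (v t y.1)) * ((starRingEnd ℂ) (w t y.2)))) * h2

lemma sepCone_sum {p q : ℕ} {ι : Type*} (s : Finset ι)
    (f : ι → Matrix (Fin p × Fin q) (Fin p × Fin q) ℂ)
    (h : ∀ i ∈ s, SepCone (f i)) : SepCone (∑ i ∈ s, f i) := by
  classical
  induction s using Finset.cons_induction with
  | empty => simpa using sepCone_zero
  | cons a s ha ih =>
      rw [Finset.sum_cons]
      exact sepCone_add (h a (Finset.mem_cons_self a s))
        (ih fun i hi => h i (Finset.mem_cons_of_mem hi))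

lemma outer_hermitian {n : Type*} (u : n → ℂ) : (outer u).IsHermitian := by
  ext x y
  simp only [outer, Matrix.conjTranspose_apply, Matrix.of_apply, star_mul',
    Complex.star_def, Complex.conj_conj]
  ring

lemma outer_posSemidef {n : Type*} [Fintype n] (u : n → ℂ) : (outer u).PosSemidef := by
  refine .of_dotProduct_mulVec_nonneg (outer_hermitian u) fun x => ?_
  have : dotProduct (star x) ((outer u) *ᵥ x) =
      (starRingEnd ℂ) (∑ b, (starRingEnd ℂ) (u b) * x b) * (∑ b, (starRingEnd ℂ) (u b) * x b) := by
    simp only [dotProduct, Matrix.mulVec, outer, Matrix.of_apply, Pi.star_apply, dotProduct,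
      map_sum, _root_.map_mul, Complex.conj_conj, Complex.star_def]
    rw [Finset.sum_mul]
    refine Finset.sum_congr rfl fun a _ => ?_
    rw [Finset.mul_sum, Finset.mul_sum]
    refine Finset.sum_congr rfl fun b _ => ?_
    ring
  rw [this, Complex.conj_mul']
  positivity
lemma outer_trace {n : Type*} [Fintype n] (u : n → ℂ) :
    (outer u).trace = ∑ x, (Complex.normSq (u x) : ℂ) := by
  simp only [Matrix.trace, Matrix.diag, outer, Matrix.of_apply]
  exact Finset.sum_congr rfl fun x _ => (Complex.mul_conj (u x))

lemma outer_density {n : Type*} [Fintype n] (u : n → ℂ)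
    (hu : ∑ x, Complex.normSq (u x) = 1) : _root_.IsDensityMatrix (outer u) := by
  refine ⟨outer_hermitian u, outer_posSemidef u, ?_⟩
  rw [outer_trace]
  norm_cast

lemma sum_normSq_nonneg {n : ℕ} (v : Fin n → ℂ) : 0 ≤ ∑ a, Complex.normSq (v a) :=
  Finset.sum_nonneg fun a _ => Complex.normSq_nonneg _

lemma eq_zero_of_sum_normSq {n : ℕ} {v : Fin n → ℂ} (h : ∑ a, Complex.normSq (v a) = 0) :
    ∀ a, v a = 0 := by
  intro a
  have := (Finset.sum_eq_zero_iff_of_nonneg (fun a _ => Complex.normSq_nonneg (v a))).mp h a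
    (Finset.mem_univ a)
  exact Complex.normSq_eq_zero.mp this

lemma outer_kron {p q : ℕ} (v : Fin p → ℂ) (w : Fin q → ℂ) :
    (outer v) ⊗ₖ (outer w) = outer (pv v w) := by
  ext x y
  simp only [Matrix.kroneckerMap_apply, outer, pv, Matrix.of_apply, _root_.map_mul]
  ring

lemma outer_smul (c : ℂ) (n : Type*) (u : n → ℂ) :
    outer (fun a => c * u a) = (c * (starRingEnd ℂ) c) • outer u := by
  ext x y
  simp only [outer, Matrix.of_apply, Matrix.smul_apply, _root_.map_mul, smul_eq_mul]
  ring

lemma pv_sum_normSq {p q : ℕ} (v : Fin p → ℂ) (w : Fin q → ℂ) :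
    ∑ x : Fin p × Fin q, Complex.normSq (pv v w x)
      = (∑ a, Complex.normSq (v a)) * (∑ b, Complex.normSq (w b)) := by
  rw [Fintype.sum_prod_type, Finset.sum_mul_sum]
  refine Finset.sum_congr rfl fun a _ => Finset.sum_congr rfl fun b _ => ?_
  simp [pv, Complex.normSq_mul]

lemma sepCone_separableState {p q : ℕ} (hp : 0 < p) (hq : 0 < q)
    {M : Matrix (Fin p × Fin q) (Fin p × Fin q) ℂ} (hM : SepCone M) (htr : M.trace = 1) :
    SeparableState M := by
  obtain ⟨m, v, w, rfl⟩ := hM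
  set nv : Fin m → ℝ := fun t => ∑ a, Complex.normSq (v t a) with hnv
  set nw : Fin m → ℝ := fun t => ∑ a, Complex.normSq (w t a) with hnw
  have hnv0 : ∀ t, 0 ≤ nv t := fun t => sum_normSq_nonneg _
  have hnw0 : ∀ t, 0 ≤ nw t := fun t => sum_normSq_nonneg _
  let v' : Fin m → Fin p → ℂ := fun t =>
    if nv t = 0 then (fun a => if a = ⟨0, hp⟩ then 1 else 0)
    else fun a => ((Real.sqrt (nv t))⁻¹ : ℝ) * v t a
  let w' : Fin m → Fin q → ℂ := fun t =>
    if nw t = 0 then (fun b => if b = ⟨0, hq⟩ then 1 else 0)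
    else fun b => ((Real.sqrt (nw t))⁻¹ : ℝ) * w t b
  have htr' : (∑ t, nv t * nw t) = 1 := by
    have h1 : (∑ t : Fin m, outer (pv (v t) (w t))).trace
        = ((∑ t, nv t * nw t : ℝ) : ℂ) := by
      rw [Matrix.trace_sum]
      push_cast
      refine Finset.sum_congr rfl fun t _ => ?_
      rw [outer_trace, ← Complex.ofReal_sum, ← Complex.ofReal_mul, pv_sum_normSq]
    rw [h1] at htr
    exact_mod_cast htr
  have hdens : ∀ {n : ℕ} (hn : 0 < n) (u : Fin n → ℂ),
      _root_.IsDensityMatrix (outer (if (∑ a, Complex.normSq (u a)) = 0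
        then (fun a => if a = ⟨0, hn⟩ then 1 else 0)
        else fun a => ((Real.sqrt (∑ a, Complex.normSq (u a)))⁻¹ : ℝ) * u a)) := by
    intro n hn u
    by_cases h : (∑ a, Complex.normSq (u a)) = 0
    · rw [if_pos h]
      refine outer_density _ ?_
      rw [Finset.sum_congr rfl (fun a _ => ?_), Finset.sum_ite_eq' Finset.univ (⟨0, hn⟩ : Fin n)
        (fun _ => (1:ℝ))]
      · simp
      · rw [apply_ite Complex.normSq]
        simp
    · rw [if_neg h]
      refine outer_density _ ?_
      have h2 : ∀ a, Complex.normSq (((Real.sqrt (∑ a, Complex.normSq (u a)))⁻¹ : ℝ) * u a)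
          = (∑ a, Complex.normSq (u a))⁻¹ * Complex.normSq (u a) := by
        intro a
        rw [Complex.normSq_mul, Complex.normSq_ofReal, ← mul_inv,
          Real.mul_self_sqrt (sum_normSq_nonneg u)]
      rw [Finset.sum_congr rfl (fun a _ => h2 a), ← Finset.mul_sum]
      exact inv_mul_cancel₀ h
  refine ⟨m, fun t => nv t * nw t, fun t => outer (v' t), fun t => outer (w' t),
    fun t => mul_nonneg (hnv0 t) (hnw0 t), htr', fun t => hdens hp (v t), fun t => hdens hq (w t),
    ?_⟩
  refine Finset.sum_congr rfl fun t _ => ?_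
  show outer (pv (v t) (w t)) = ((nv t * nw t : ℝ) : ℂ) • (outer (v' t) ⊗ₖ outer (w' t))
  by_cases hv : nv t = 0
  · have hv0 : ∀ a, v t a = 0 := eq_zero_of_sum_normSq hv
    have : outer (pv (v t) (w t)) = 0 := by
      ext x y
      simp [outer, pv, hv0]
    rw [this]
    simp [hv]
  · by_cases hw : nw t = 0
    · have hw0 : ∀ b, w t b = 0 := eq_zero_of_sum_normSq hw
      have : outer (pv (v t) (w t)) = 0 := by
        ext x y
        simp [outer, pv, hw0]
      rw [this]
      simp [hw]
    · have hv' : v' t = fun a => ((Real.sqrt (nv t))⁻¹ : ℝ) * v t a := by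
        simp only [v', if_neg hv]
      have hw' : w' t = fun b => ((Real.sqrt (nw t))⁻¹ : ℝ) * w t b := by
        simp only [w', if_neg hw]
      rw [hv', hw', outer_kron]
      have hpv : pv (fun a => ((Real.sqrt (nv t))⁻¹ : ℝ) * v t a)
          (fun b => ((Real.sqrt (nw t))⁻¹ : ℝ) * w t b)
          = fun x => ((((Real.sqrt (nv t))⁻¹ * (Real.sqrt (nw t))⁻¹ : ℝ)) : ℂ)
              * pv (v t) (w t) x := by
        funext x
        simp only [pv]
        push_cast
        ring
      rw [hpv, outer_smul, smul_smul]
      have hsc : ((nv t * nw t : ℝ) : ℂ) *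
          (((((Real.sqrt (nv t))⁻¹ * (Real.sqrt (nw t))⁻¹ : ℝ)) : ℂ) *
            (starRingEnd ℂ) ((((Real.sqrt (nv t))⁻¹ * (Real.sqrt (nw t))⁻¹ : ℝ)) : ℂ)) = 1 := by
        rw [Complex.conj_ofReal, ← Complex.ofReal_mul, ← Complex.ofReal_mul]
        rw [show ((Real.sqrt (nv t))⁻¹ * (Real.sqrt (nw t))⁻¹) *
            ((Real.sqrt (nv t))⁻¹ * (Real.sqrt (nw t))⁻¹)
            = ((Real.sqrt (nv t) * Real.sqrt (nv t))⁻¹ * (Real.sqrt (nw t) * Real.sqrt (nw t))⁻¹)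
          by ring]
        rw [Real.mul_self_sqrt (hnv0 t), Real.mul_self_sqrt (hnw0 t),
          Complex.ofReal_eq_one]
        field_simp
      rw [hsc, one_smul]

lemma rootSum (n : ℕ) (hn : n ≠ 0) (t : ℤ) :
    ∑ s : Fin n, (Complex.exp (2 * Real.pi * Complex.I / n)) ^ ((s : ℤ) * t)
      = if (n : ℤ) ∣ t then (n : ℂ) else 0 := by
  have hprim : IsPrimitiveRoot (Complex.exp (2 * Real.pi * Complex.I / n)) n :=
    Complex.isPrimitiveRoot_exp n hn
  set ω := Complex.exp (2 * Real.pi * Complex.I / n) with hωdef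
  have hzc : ∀ s : Fin n, ω ^ ((s : ℤ) * t) = (ω ^ t) ^ (s : ℕ) := by
    intro s
    rw [mul_comm, _root_.zpow_mul, ← zpow_natCast]
  rw [Finset.sum_congr rfl fun s _ => hzc s]
  by_cases hd : (n : ℤ) ∣ t
  · rw [if_pos hd, (hprim.zpow_eq_one_iff_dvd t).mpr hd]
    simp
  · rw [if_neg hd]
    have h1 : ω ^ t ≠ 1 := fun h => hd ((hprim.zpow_eq_one_iff_dvd t).mp h)
    have h2 : (ω ^ t) ^ n = 1 := by
      rw [← zpow_natCast, ← _root_.zpow_mul, mul_comm, _root_.zpow_mul, zpow_natCast,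
        hprim.pow_eq_one, _root_.one_zpow]
    rw [Fin.sum_univ_eq_sum_range, geom_sum_eq h1, h2]
    simp

lemma fin_dvd_iff_eq {n : ℕ} (m0 m1 : Fin n) : (n : ℤ) ∣ ((m0 : ℤ) - m1) ↔ m0 = m1 := by
  constructor
  · intro h
    have h2 : |((m0 : ℤ) - m1)| < n := by
      have := m0.isLt; have := m1.isLt
      rw [abs_sub_lt_iff]
      constructor <;> [skip; skip] <;> push_cast <;> omega
    have := Int.eq_zero_of_abs_lt_dvd h h2
    have : (m0 : ℤ) = m1 := by omega
    exact Fin.ext (by exact_mod_cast this)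
  · rintro rfl; simp

lemma fin_val_add_one {n : ℕ} [NeZero n] (m0 : Fin n) :
    ((m0 + 1 : Fin n) : ℕ) = if (m0 : ℕ) + 1 = n then 0 else (m0 : ℕ) + 1 := by
  have h : ((m0 + 1 : Fin n) : ℕ) = ((m0 : ℕ) + ((1 : Fin n) : ℕ)) % n := by
    rw [Fin.add_def]
  rcases Nat.lt_or_ge 1 n with h1 | h1
  · rw [Fin.val_one', Nat.mod_eq_of_lt h1] at h
    rw [h]
    by_cases h2 : (m0 : ℕ) + 1 = n
    · rw [if_pos h2, h2, Nat.mod_self]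
    · rw [if_neg h2, Nat.mod_eq_of_lt (lt_of_le_of_ne m0.isLt h2)]
  · have hn1 : n = 1 := le_antisymm h1 (Nat.pos_of_ne_zero (NeZero.ne n))
    subst hn1
    have := m0.isLt
    interval_cases h0 : (m0 : ℕ)
    simp

lemma fin_dvd_iff_succ {n : ℕ} [NeZero n] (m0 m1 : Fin n) :
    (n : ℤ) ∣ (1 + (m0 : ℤ) - m1) ↔ m1 = m0 + 1 := by
  have hn : 0 < n := Nat.pos_of_ne_zero (NeZero.ne n)
  have hval := fin_val_add_one m0
  have h0 := m0.isLt; have h1 := m1.isLt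
  constructor
  · rintro ⟨c, hc⟩
    have hcge : 0 ≤ c := by nlinarith [hc, h0, h1, hn]
    have hcle : c ≤ 1 := by nlinarith [hc, h0, h1, hn]
    refine Fin.ext ?_
    rw [hval]
    interval_cases c
    · rw [mul_zero] at hc
      have hb : (m1 : ℕ) = (m0 : ℕ) + 1 := by push_cast at hc; omega
      rw [if_neg (by omega), hb]
    · rw [mul_one] at hc
      have hb : (m0 : ℕ) + 1 = n ∧ (m1 : ℕ) = 0 := by push_cast at hc; constructor <;> omega
      rw [if_pos hb.1, hb.2]
  · intro h
    subst h
    rw [hval] at h1 ⊢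
    by_cases h2 : (m0 : ℕ) + 1 = n
    · refine ⟨1, ?_⟩
      rw [if_pos h2] at *
      push_cast
      omega
    · refine ⟨0, ?_⟩
      rw [if_neg h2] at *
      push_cast
      omega


def rou (n : ℕ) : ℂ := Complex.exp (2 * Real.pi * Complex.I / n)

lemma rou_ne_zero (n : ℕ) : rou n ≠ 0 := Complex.exp_ne_zero _

lemma conj_rou (n : ℕ) : (starRingEnd ℂ) (rou n) = (rou n)⁻¹ := by
  rw [rou, ← Complex.exp_conj, ← Complex.exp_neg]
  congr 1
  simp [Complex.conj_ofReal, map_ofNat]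
  ring

lemma conj_rou_zpow (n : ℕ) (t : ℤ) : (starRingEnd ℂ) ((rou n) ^ t) = (rou n) ^ (-t) := by
  rw [map_zpow₀, conj_rou, _root_.inv_zpow, ← _root_.zpow_neg]

open Classical in
/-- circuit matrix of an injective cycle -/
def circ {q n : ℕ} [NeZero n] (f : Fin n → Fin q) : Matrix (Fin q) (Fin q) ℝ :=
  Matrix.of fun a b => if ∃ m, a = f m ∧ b = f (m + 1) then 1 else 0

lemma circ_apply_eq {q n : ℕ} [NeZero n] {f : Fin n → Fin q} (hf : Function.Injective f)
    (m0 m1 : Fin n) : circ f (f m0) (f m1) = if m1 = m0 + 1 then 1 else 0 := by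
  simp only [circ, Matrix.of_apply]
  refine if_congr ?_ rfl rfl
  constructor
  · rintro ⟨m, hm, hm1⟩
    cases hf hm
    exact hf hm1
  · intro h
    exact ⟨m0, rfl, by rw [← h]⟩

lemma circ_apply_left {q n : ℕ} [NeZero n] {f : Fin n → Fin q} {a : Fin q}
    (ha : ∀ m, a ≠ f m) (b : Fin q) : circ f a b = 0 := by
  simp only [circ, Matrix.of_apply]
  rw [if_neg]
  rintro ⟨m, hm, -⟩
  exact ha m hm

lemma circ_apply_right {q n : ℕ} [NeZero n] {f : Fin n → Fin q} {b : Fin q}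
    (hb : ∀ m, b ≠ f m) (a : Fin q) : circ f a b = 0 := by
  simp only [circ, Matrix.of_apply]
  rw [if_neg]
  rintro ⟨m, -, hm⟩
  exact hb (m + 1) hm

lemma circ_nonneg {q n : ℕ} [NeZero n] (f : Fin n → Fin q) (a b : Fin q) : 0 ≤ circ f a b := by
  simp only [circ, Matrix.of_apply]
  split <;> norm_num

lemma circ_apply_row {q n : ℕ} [NeZero n] {f : Fin n → Fin q} (hf : Function.Injective f)
    (m0 : Fin n) (b : Fin q) : circ f (f m0) b = if b = f (m0 + 1) then 1 else 0 := by
  simp only [circ, Matrix.of_apply]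
  refine if_congr ?_ rfl rfl
  constructor
  · rintro ⟨m, hm, hm1⟩
    cases hf hm
    exact hm1
  · intro h
    exact ⟨m0, rfl, h⟩

lemma circ_apply_col {q n : ℕ} [NeZero n] {f : Fin n → Fin q} (hf : Function.Injective f)
    (m1 : Fin n) (a : Fin q) : circ f a (f m1) = if a = f (m1 - 1) then 1 else 0 := by
  simp only [circ, Matrix.of_apply]
  refine if_congr ?_ rfl rfl
  constructor
  · rintro ⟨m, hm, hm1⟩
    have hm' : m = m1 - 1 := eq_sub_iff_add_eq.mpr (hf hm1).symm
    rw [hm'] at hm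
    exact hm
  · intro h
    refine ⟨m1 - 1, h, by rw [sub_add_cancel]⟩

lemma circ_row {q n : ℕ} [NeZero n] {f : Fin n → Fin q} (hf : Function.Injective f) (a : Fin q) :
    ∑ b, circ f a b = if ∃ m, a = f m then 1 else 0 := by
  by_cases h : ∃ m, a = f m
  · obtain ⟨m0, rfl⟩ := h
    rw [if_pos ⟨m0, rfl⟩]
    rw [Finset.sum_congr rfl fun b _ => circ_apply_row hf m0 b]
    simp
  · rw [if_neg h, Finset.sum_eq_zero fun b _ => circ_apply_left (fun m hm => h ⟨m, hm⟩) b]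

lemma circ_col {q n : ℕ} [NeZero n] {f : Fin n → Fin q} (hf : Function.Injective f) (b : Fin q) :
    ∑ a, circ f a b = if ∃ m, b = f m then 1 else 0 := by
  by_cases h : ∃ m, b = f m
  · obtain ⟨m1, rfl⟩ := h
    rw [if_pos ⟨m1, rfl⟩]
    rw [Finset.sum_congr rfl fun a _ => circ_apply_col hf m1 a]
    simp
  · rw [if_neg h, Finset.sum_eq_zero fun a _ => circ_apply_right (fun m hm => h ⟨m, hm⟩) a]

lemma circ_lss {q n : ℕ} [NeZero n] {f : Fin n → Fin q} (hf : Function.Injective f) :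
    LineSumSymm (circ f) := by
  intro j
  rw [circ_row hf, circ_col hf]


def Gmat {p q : ℕ} (i k : Fin p) (B : Matrix (Fin q) (Fin q) ℝ) :
    Matrix (Fin p × Fin q) (Fin p × Fin q) ℝ :=
  Matrix.of fun x y =>
    if x.1 = i ∧ y.1 = i then (if x.2 = y.2 then ∑ l, B x.2 l else 0)
    else if x.1 = k ∧ y.1 = k then (if x.2 = y.2 then ∑ l, B x.2 l else 0)
    else if x.1 = i ∧ y.1 = k then -(B x.2 y.2)
    else if x.1 = k ∧ y.1 = i then -(B y.2 x.2)
    else 0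

def pairVec {p : ℕ} (i k : Fin p) {n : ℕ} (s : Fin n) : Fin p → ℂ :=
  fun a => if a = i then 1 else if a = k then -((rou n) ^ (-(s : ℤ))) else 0

open Classical in
def circVec {q n : ℕ} (f : Fin n → Fin q) (s : Fin n) : Fin q → ℂ :=
  fun b => (((Real.sqrt n)⁻¹ : ℝ) : ℂ)
    * ∑ m : Fin n, (if b = f m then (rou n) ^ ((s : ℤ) * (m : ℤ)) else 0)

lemma circVec_apply {q n : ℕ} {f : Fin n → Fin q} (hf : Function.Injective f) (s m0 : Fin n) :
    circVec f s (f m0) = (((Real.sqrt n)⁻¹ : ℝ) : ℂ) * (rou n) ^ ((s : ℤ) * (m0 : ℤ)) := by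
  simp only [circVec]
  congr 1
  rw [Finset.sum_eq_single m0]
  · rw [if_pos rfl]
  · intro m _ hm
    exact if_neg (fun h => hm (hf h).symm)
  · intro h
    exact absurd (Finset.mem_univ m0) h

lemma circVec_apply_zero {q n : ℕ} {f : Fin n → Fin q} {b : Fin q} (hb : ∀ m, b ≠ f m)
    (s : Fin n) : circVec f s b = 0 := by
  simp only [circVec]
  rw [Finset.sum_eq_zero, mul_zero]
  intro m _
  exact if_neg (hb m)


lemma rootSum' (n : ℕ) (hn : n ≠ 0) (t : ℤ) :
    ∑ s : Fin n, (rou n) ^ ((s : ℤ) * t) = if (n : ℤ) ∣ t then (n : ℂ) else 0 :=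
  rootSum n hn t

lemma pairVec_i {p n : ℕ} (i k : Fin p) (s : Fin n) : pairVec i k s i = 1 := by
  rw [pairVec, if_pos rfl]

lemma pairVec_k {p n : ℕ} {i k : Fin p} (hik : i ≠ k) (s : Fin n) :
    pairVec i k s k = -((rou n) ^ (-(s : ℤ))) := by
  rw [pairVec, if_neg (Ne.symm hik), if_pos rfl]

lemma pairVec_other {p n : ℕ} {i k a : Fin p} (hai : a ≠ i) (hak : a ≠ k) (s : Fin n) :
    pairVec i k s a = 0 := by
  rw [pairVec, if_neg hai, if_neg hak]

lemma sepCone_Gmat_circ {p q n : ℕ} [NeZero n] (f : Fin n → Fin q) (hf : Function.Injective f)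
    {i k : Fin p} (hik : i ≠ k) :
    SepCone ((Gmat i k (circ f)).map (fun x => (x : ℂ))) := by
  classical
  have hn : n ≠ 0 := NeZero.ne n
  have hω0 : rou n ≠ 0 := rou_ne_zero n
  have hsq : (((Real.sqrt n)⁻¹ : ℝ) : ℂ) * (((Real.sqrt n)⁻¹ : ℝ) : ℂ) = (n : ℂ)⁻¹ := by
    rw [← Complex.ofReal_mul, ← mul_inv, Real.mul_self_sqrt (Nat.cast_nonneg n)]
    push_cast
    rfl
  have main : ∀ (t : ℤ) (m0 m1 : Fin n),
      (∑ s : Fin n, (rou n) ^ ((s : ℤ) * t)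
        * ((((Real.sqrt n)⁻¹ : ℝ) : ℂ) * (rou n) ^ ((s : ℤ) * (m0 : ℤ)))
        * ((((Real.sqrt n)⁻¹ : ℝ) : ℂ) * (rou n) ^ (-((s : ℤ) * (m1 : ℤ)))))
      = if (n : ℤ) ∣ (t + (m0 : ℤ) - (m1 : ℤ)) then 1 else 0 := by
    intro t m0 m1
    have hstep : ∀ s : Fin n,
        (rou n) ^ ((s : ℤ) * t)
          * ((((Real.sqrt n)⁻¹ : ℝ) : ℂ) * (rou n) ^ ((s : ℤ) * (m0 : ℤ)))
          * ((((Real.sqrt n)⁻¹ : ℝ) : ℂ) * (rou n) ^ (-((s : ℤ) * (m1 : ℤ))))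
        = (n : ℂ)⁻¹ * (rou n) ^ ((s : ℤ) * (t + (m0 : ℤ) - (m1 : ℤ))) := by
      intro s
      rw [show ((s : ℤ) * (t + (m0 : ℤ) - (m1 : ℤ)))
          = (s : ℤ) * t + ((s : ℤ) * (m0 : ℤ) + -((s : ℤ) * (m1 : ℤ))) by ring]
      rw [zpow_add₀ hω0, zpow_add₀ hω0, ← hsq]
      ring
    rw [Finset.sum_congr rfl fun s _ => hstep s, ← Finset.mul_sum,
      rootSum' n hn (t + (m0 : ℤ) - (m1 : ℤ))]
    by_cases hd : (n : ℤ) ∣ (t + (m0 : ℤ) - (m1 : ℤ))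
    · rw [if_pos hd, if_pos hd, inv_mul_cancel₀ (by exact_mod_cast hn)]
    · rw [if_neg hd, if_neg hd, mul_zero]
  refine ⟨n, fun s => pairVec i k s, fun s => circVec f s, ?_⟩
  ext ⟨x1, x2⟩ ⟨y1, y2⟩
  rw [Matrix.map_apply, Matrix.sum_apply]
  simp only [outer, pv, Matrix.of_apply, _root_.map_mul, Gmat]
  by_cases hx1 : x1 = i
  · by_cases hy1 : y1 = i
    · -- case (i,i)
      rw [if_pos ⟨hx1, hy1⟩]
      by_cases hx2 : ∃ m, x2 = f m
      · obtain ⟨m0, rfl⟩ := hx2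
        by_cases hy2 : ∃ m, y2 = f m
        · obtain ⟨m1, rfl⟩ := hy2
          have hstep : ∀ s : Fin n,
              pairVec i k s x1 * circVec f s (f m0)
                * ((starRingEnd ℂ) (pairVec i k s y1) * (starRingEnd ℂ) (circVec f s (f m1)))
              = (rou n) ^ ((s : ℤ) * (0 : ℤ))
                * ((((Real.sqrt n)⁻¹ : ℝ) : ℂ) * (rou n) ^ ((s : ℤ) * (m0 : ℤ)))
                * ((((Real.sqrt n)⁻¹ : ℝ) : ℂ) * (rou n) ^ (-((s : ℤ) * (m1 : ℤ)))) := by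
            intro s
            rw [hx1, hy1, pairVec_i, circVec_apply hf, circVec_apply hf,
              _root_.map_mul, Complex.conj_ofReal, conj_rou_zpow, _root_.map_one, mul_zero,
              zpow_zero]
            ring
          rw [Finset.sum_congr rfl fun s _ => hstep s, main 0 m0 m1]
          by_cases he : m0 = m1
          · rw [if_pos (congrArg f he), circ_row hf (f m0),
              if_pos (show ∃ m, f m0 = f m from ⟨m0, rfl⟩),
              if_pos (show (n : ℤ) ∣ 0 + (m0 : ℤ) - (m1 : ℤ) from ⟨0, by rw [he]; ring⟩)]
            norm_num
          · rw [if_neg (fun h => he (hf h)), if_neg (fun h => he ((fin_dvd_iff_eq m0 m1).mp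
              (by rw [show ((m0 : ℤ) - m1) = 0 + m0 - m1 by ring]; exact h)))]
            norm_num
        · push_neg at hy2
          refine Eq.trans ?_ (Finset.sum_eq_zero (fun s _ => by
            rw [circVec_apply_zero hy2 s, map_zero, mul_zero, mul_zero])).symm
          rw [if_neg fun h => hy2 m0 (by rw [← h]), Complex.ofReal_zero]
      · push_neg at hx2
        refine Eq.trans ?_ (Finset.sum_eq_zero (fun s _ => by
          rw [circVec_apply_zero hx2 s, mul_zero, zero_mul])).symm
        by_cases he : x2 = y2
        · rw [if_pos he, circ_row hf x2, if_neg (show ¬∃ m, x2 = f m by push_neg; exact hx2)]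
          norm_num
        · rw [if_neg he]; norm_num
    · by_cases hy1k : y1 = k
      · -- case (i,k)
        rw [if_neg (fun h => hy1 h.2), if_neg (fun h => hik (hx1.symm.trans h.1)),
          if_pos ⟨hx1, hy1k⟩]
        by_cases hx2 : ∃ m, x2 = f m
        · obtain ⟨m0, rfl⟩ := hx2
          by_cases hy2 : ∃ m, y2 = f m
          · obtain ⟨m1, rfl⟩ := hy2
            have hstep : ∀ s : Fin n,
                pairVec i k s x1 * circVec f s (f m0)
                  * ((starRingEnd ℂ) (pairVec i k s y1) * (starRingEnd ℂ) (circVec f s (f m1)))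
                = -((rou n) ^ ((s : ℤ) * (1 : ℤ))
                  * ((((Real.sqrt n)⁻¹ : ℝ) : ℂ) * (rou n) ^ ((s : ℤ) * (m0 : ℤ)))
                  * ((((Real.sqrt n)⁻¹ : ℝ) : ℂ) * (rou n) ^ (-((s : ℤ) * (m1 : ℤ))))) := by
              intro s
              rw [hx1, hy1k, pairVec_i, pairVec_k hik, circVec_apply hf, circVec_apply hf,
                _root_.map_mul, Complex.conj_ofReal, conj_rou_zpow, map_neg, conj_rou_zpow,
                neg_neg]
              rw [show (rou n) ^ ((s : ℤ) * (1 : ℤ)) = (rou n) ^ ((s : ℤ)) by norm_num]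
              ring
            rw [Finset.sum_congr rfl fun s _ => hstep s, Finset.sum_neg_distrib,
              main 1 m0 m1, circ_apply_eq hf m0 m1]
            by_cases he : m1 = m0 + 1
            · rw [if_pos he, if_pos ((fin_dvd_iff_succ m0 m1).mpr he)]
              norm_num
            · rw [if_neg he, if_neg (fun h => he ((fin_dvd_iff_succ m0 m1).mp h))]
              norm_num
          · push_neg at hy2
            refine Eq.trans ?_ (Finset.sum_eq_zero (fun s _ => by
              rw [circVec_apply_zero hy2 s, map_zero, mul_zero, mul_zero])).symm
            rw [circ_apply_right hy2, neg_zero, Complex.ofReal_zero]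
        · push_neg at hx2
          refine Eq.trans ?_ (Finset.sum_eq_zero (fun s _ => by
            rw [circVec_apply_zero hx2 s, mul_zero, zero_mul])).symm
          rw [circ_apply_left hx2, neg_zero, Complex.ofReal_zero]
      · -- y1 not i, k : RHS zero
        rw [if_neg (fun h => hy1 h.2), if_neg (fun h => hy1k h.2), if_neg (fun h => hy1k h.2),
          if_neg (fun h => hy1 h.2)]
        refine Eq.trans ?_ (Finset.sum_eq_zero (fun s _ => by
          rw [pairVec_other hy1 hy1k s, map_zero, zero_mul, mul_zero])).symm
        rw [Complex.ofReal_zero]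
  · by_cases hx1k : x1 = k
    · by_cases hy1 : y1 = i
      · -- case (k,i)
        rw [if_neg (fun h => hx1 h.1), if_neg (fun h => hik ((h.2).symm.trans hy1).symm),
          if_neg (fun h => hx1 h.1), if_pos ⟨hx1k, hy1⟩]
        by_cases hx2 : ∃ m, x2 = f m
        · obtain ⟨m0, rfl⟩ := hx2
          by_cases hy2 : ∃ m, y2 = f m
          · obtain ⟨m1, rfl⟩ := hy2
            have hstep : ∀ s : Fin n,
                pairVec i k s x1 * circVec f s (f m0)
                  * ((starRingEnd ℂ) (pairVec i k s y1) * (starRingEnd ℂ) (circVec f s (f m1)))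
                = -((rou n) ^ ((s : ℤ) * (-1 : ℤ))
                  * ((((Real.sqrt n)⁻¹ : ℝ) : ℂ) * (rou n) ^ ((s : ℤ) * (m0 : ℤ)))
                  * ((((Real.sqrt n)⁻¹ : ℝ) : ℂ) * (rou n) ^ (-((s : ℤ) * (m1 : ℤ))))) := by
              intro s
              rw [hx1k, hy1, pairVec_i, pairVec_k hik, circVec_apply hf, circVec_apply hf,
                _root_.map_mul, Complex.conj_ofReal, conj_rou_zpow, _root_.map_one]
              rw [show (rou n) ^ ((s : ℤ) * (-1 : ℤ)) = (rou n) ^ (-(s : ℤ)) by norm_num]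
              ring
            rw [Finset.sum_congr rfl fun s _ => hstep s, Finset.sum_neg_distrib,
              main (-1) m0 m1, circ_apply_eq hf m1 m0]
            by_cases he : m0 = m1 + 1
            · rw [if_pos he, if_pos (show (n : ℤ) ∣ (-1 + (m0 : ℤ) - (m1 : ℤ)) by
                rw [show (-1 + (m0 : ℤ) - (m1 : ℤ)) = -(1 + (m1 : ℤ) - (m0 : ℤ)) by ring]
                exact (dvd_neg).mpr ((fin_dvd_iff_succ m1 m0).mpr he))]
              norm_num
            · rw [if_neg he, if_neg (fun h => he ((fin_dvd_iff_succ m1 m0).mp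
                ((dvd_neg).mp (by rw [show -(1 + (m1 : ℤ) - (m0 : ℤ))
                  = -1 + (m0 : ℤ) - (m1 : ℤ) by ring]; exact h))))]
              norm_num
          · push_neg at hy2
            refine Eq.trans ?_ (Finset.sum_eq_zero (fun s _ => by
              rw [circVec_apply_zero hy2 s, map_zero, mul_zero, mul_zero])).symm
            rw [circ_apply_left hy2, neg_zero, Complex.ofReal_zero]
        · push_neg at hx2
          refine Eq.trans ?_ (Finset.sum_eq_zero (fun s _ => by
            rw [circVec_apply_zero hx2 s, mul_zero, zero_mul])).symm
          rw [circ_apply_right hx2, neg_zero, Complex.ofReal_zero]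
      · by_cases hy1k : y1 = k
        · -- case (k,k)
          rw [if_neg (fun h => hy1 h.2), if_pos ⟨hx1k, hy1k⟩]
          by_cases hx2 : ∃ m, x2 = f m
          · obtain ⟨m0, rfl⟩ := hx2
            by_cases hy2 : ∃ m, y2 = f m
            · obtain ⟨m1, rfl⟩ := hy2
              have hstep : ∀ s : Fin n,
                  pairVec i k s x1 * circVec f s (f m0)
                    * ((starRingEnd ℂ) (pairVec i k s y1) * (starRingEnd ℂ) (circVec f s (f m1)))
                  = (rou n) ^ ((s : ℤ) * (0 : ℤ))
                    * ((((Real.sqrt n)⁻¹ : ℝ) : ℂ) * (rou n) ^ ((s : ℤ) * (m0 : ℤ)))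
                    * ((((Real.sqrt n)⁻¹ : ℝ) : ℂ) * (rou n) ^ (-((s : ℤ) * (m1 : ℤ)))) := by
                intro s
                rw [hx1k, hy1k, pairVec_k hik, circVec_apply hf,
                  circVec_apply hf, _root_.map_mul, Complex.conj_ofReal, conj_rou_zpow,
                  map_neg, conj_rou_zpow, neg_neg, mul_zero, zpow_zero]
                have hinv : (rou n) ^ (-(s : ℤ)) * (rou n) ^ ((s : ℤ)) = 1 := by
                  rw [← zpow_add₀ hω0]
                  norm_num
                linear_combination ((((Real.sqrt n)⁻¹ : ℝ) : ℂ) * (rou n) ^ ((s : ℤ) * (m0 : ℤ))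
                  * ((((Real.sqrt n)⁻¹ : ℝ) : ℂ) * (rou n) ^ (-((s : ℤ) * (m1 : ℤ))))) * hinv
              rw [Finset.sum_congr rfl fun s _ => hstep s, main 0 m0 m1]
              by_cases he : m0 = m1
              · rw [if_pos (congrArg f he), circ_row hf (f m0),
                  if_pos (show ∃ m, f m0 = f m from ⟨m0, rfl⟩),
                  if_pos (show (n : ℤ) ∣ 0 + (m0 : ℤ) - (m1 : ℤ) from ⟨0, by rw [he]; ring⟩)]
                norm_num
              · rw [if_neg (fun h => he (hf h)), if_neg (fun h => he ((fin_dvd_iff_eq m0 m1).mp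
                  (by rw [show ((m0 : ℤ) - m1) = 0 + m0 - m1 by ring]; exact h)))]
                norm_num
            · push_neg at hy2
              refine Eq.trans ?_ (Finset.sum_eq_zero (fun s _ => by
                rw [circVec_apply_zero hy2 s, map_zero, mul_zero, mul_zero])).symm
              rw [if_neg fun h => hy2 m0 (by rw [← h]), Complex.ofReal_zero]
          · push_neg at hx2
            refine Eq.trans ?_ (Finset.sum_eq_zero (fun s _ => by
              rw [circVec_apply_zero hx2 s, mul_zero, zero_mul])).symm
            by_cases he : x2 = y2
            · rw [if_pos he, circ_row hf x2,
                if_neg (show ¬∃ m, x2 = f m by push_neg; exact hx2)]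
              norm_num
            · rw [if_neg he]; norm_num
        · -- y1 not i,k
          rw [if_neg (fun h => hy1 h.2), if_neg (fun h => hy1k h.2), if_neg (fun h => hy1k h.2),
            if_neg (fun h => hy1 h.2)]
          refine Eq.trans ?_ (Finset.sum_eq_zero (fun s _ => by
            rw [pairVec_other hy1 hy1k s, map_zero, zero_mul, mul_zero])).symm
          rw [Complex.ofReal_zero]
    · -- x1 not i,k : everything zero
      rw [if_neg (fun h => hx1 h.1), if_neg (fun h => hx1k h.1), if_neg (fun h => hx1 h.1),
        if_neg (fun h => hx1k h.1)]
      refine Eq.trans ?_ (Finset.sum_eq_zero (fun s _ => by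
        rw [pairVec_other hx1 hx1k s, zero_mul, zero_mul])).symm
      rw [Complex.ofReal_zero]


lemma exists_pos_entry {q : ℕ} {B : Matrix (Fin q) (Fin q) ℝ} (hB : ∀ a b, 0 ≤ B a b)
    (hlss : LineSumSymm B) {j' j : Fin q} (h : 0 < B j' j) : ∃ l, 0 < B j l := by
  by_contra hno
  push_neg at hno
  have hrow : ∑ l, B j l = 0 :=
    le_antisymm (Finset.sum_nonpos fun l _ => hno l) (Finset.sum_nonneg fun l _ => hB j l)
  have hcol : 0 < ∑ l, B l j :=
    lt_of_lt_of_le h (Finset.single_le_sum (fun l _ => hB l j) (Finset.mem_univ j'))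
  rw [← hlss j, hrow] at hcol
  exact lt_irrefl 0 hcol

lemma exists_cycle {q : ℕ} {B : Matrix (Fin q) (Fin q) ℝ} (hB : ∀ a b, 0 ≤ B a b)
    (hlss : LineSumSymm B) {j0 l0 : Fin q} (h0 : 0 < B j0 l0) :
    ∃ (n : ℕ) (g : ℕ → Fin q), 0 < n ∧
      (∀ a b, a < n → b < n → g a = g b → a = b) ∧
      (∀ t, t < n → 0 < B (g t) (g ((t + 1) % n))) := by
  classical
  let g : ℕ → Fin q :=
    fun t => Nat.rec l0 (fun _ prev => if h : ∃ l, 0 < B prev l then h.choose else j0) t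
  have hgdef : ∀ t, g (t + 1) = if h : ∃ l, 0 < B (g t) l then h.choose else j0 := fun t => rfl
  have hg : ∀ t, 0 < B (g t) (g (t + 1)) := by
    intro t
    induction t with
    | zero =>
        have h : ∃ l, 0 < B l0 l := exists_pos_entry hB hlss h0
        have hg0 : g 0 = l0 := rfl
        rw [hgdef 0, hg0, dif_pos h]
        exact h.choose_spec
    | succ t ih =>
        have h : ∃ l, 0 < B (g (t + 1)) l := exists_pos_entry hB hlss ih
        rw [hgdef (t + 1), dif_pos h]
        exact h.choose_spec
  have hpg : ∃ T, ∃ t', t' < T ∧ g t' = g T := by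
    have hni : ¬ Function.Injective (fun t : Fin (q + 1) => g t) := by
      intro hinj
      have := Fintype.card_le_of_injective _ hinj
      simp only [Fintype.card_fin] at this
      omega
    rw [Function.not_injective_iff] at hni
    obtain ⟨a, b, hab, hne⟩ := hni
    rcases Ne.lt_or_gt hne with hlt | hlt
    · exact ⟨(b : ℕ), (a : ℕ), hlt, hab⟩
    · exact ⟨(a : ℕ), (b : ℕ), hlt, hab.symm⟩
  haveI : DecidablePred fun T => ∃ t', t' < T ∧ g t' = g T := fun _ => Classical.dec _
  set T0 := Nat.find hpg with hT0
  obtain ⟨t1, ht1lt, ht1eq⟩ := Nat.find_spec hpg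
  refine ⟨T0 - t1, fun m => g (t1 + m), by omega, ?_, ?_⟩
  · intro a b ha hb heq
    by_contra hne
    rcases Nat.lt_or_ge a b with hlt | hge
    · have hP : ∃ t', t' < t1 + b ∧ g t' = g (t1 + b) := ⟨t1 + a, by omega, heq⟩
      have := Nat.find_min hpg (m := t1 + b) (by omega) hP
      exact this
    · have hlt : b < a := by omega
      have hP : ∃ t', t' < t1 + a ∧ g t' = g (t1 + a) := ⟨t1 + b, by omega, heq.symm⟩
      exact Nat.find_min hpg (m := t1 + a) (by omega) hP
  · intro t ht
    by_cases hlast : t + 1 < T0 - t1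
    · show 0 < B (g (t1 + t)) (g (t1 + (t + 1) % (T0 - t1)))
      rw [Nat.mod_eq_of_lt hlast, show t1 + (t + 1) = (t1 + t) + 1 by ring]
      exact hg (t1 + t)
    · have he1 : (t + 1) % (T0 - t1) = 0 := by
        have : t + 1 = T0 - t1 := by omega
        rw [this, Nat.mod_self]
      show 0 < B (g (t1 + t)) (g (t1 + (t + 1) % (T0 - t1)))
      rw [he1, Nat.add_zero, ht1eq, show Nat.find hpg = (t1 + t) + 1 by omega]
      exact hg (t1 + t)

lemma sepCone_Gmat {p q : ℕ} {i k : Fin p} (hik : i ≠ k) :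
    ∀ (N : ℕ) (B : Matrix (Fin q) (Fin q) ℝ),
      (Finset.filter (fun e : Fin q × Fin q => B e.1 e.2 ≠ 0) Finset.univ).card ≤ N →
      (∀ a b, 0 ≤ B a b) → LineSumSymm B →
      SepCone ((Gmat i k B).map (fun x => (x : ℂ))) := by
  intro N
  induction N with
  | zero =>
      intro B hcard hB hlss
      have hB0 : ∀ a b, B a b = 0 := by
        intro a b
        by_contra hne
        have hmem : (a, b) ∈ Finset.filter
            (fun e : Fin q × Fin q => B e.1 e.2 ≠ 0) Finset.univ := by
          simp [hne]
        have := Finset.card_pos.mpr ⟨_, hmem⟩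
        omega
      have hz : (Gmat i k B).map (fun x => (x : ℂ)) = 0 := by
        ext ⟨x1, x2⟩ ⟨y1, y2⟩
        simp only [Gmat, Matrix.map_apply, Matrix.of_apply, Matrix.zero_apply]
        split_ifs <;> simp [hB0]
      rw [hz]
      exact sepCone_zero
  | succ N ih =>
      intro B hcard hB hlss
      by_cases hzero : ∀ a b, B a b = 0
      · have hz : (Gmat i k B).map (fun x => (x : ℂ)) = 0 := by
          ext ⟨x1, x2⟩ ⟨y1, y2⟩
          simp only [Gmat, Matrix.map_apply, Matrix.of_apply, Matrix.zero_apply]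
          split_ifs <;> simp [hzero]
        rw [hz]
        exact sepCone_zero
      · push_neg at hzero
        obtain ⟨j0, l0, hne0⟩ := hzero
        have hpos : 0 < B j0 l0 := lt_of_le_of_ne (hB j0 l0) (Ne.symm hne0)
        obtain ⟨n, g, hn, hinj, hedge⟩ := exists_cycle hB hlss hpos
        haveI : NeZero n := ⟨by omega⟩
        set f : Fin n → Fin q := fun m => g (m : ℕ) with hfdef
        have hfinj : Function.Injective f :=
          fun a b hab => Fin.ext (hinj _ _ a.isLt b.isLt hab)
        have hedge' : ∀ m : Fin n, 0 < B (f m) (f (m + 1)) := by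
          intro m
          have h1 := hedge (m : ℕ) m.isLt
          have h2 : ((m + 1 : Fin n) : ℕ) = ((m : ℕ) + 1) % n := by
            rw [fin_val_add_one]
            split_ifs with h
            · rw [h, Nat.mod_self]
            · rw [Nat.mod_eq_of_lt (by have := m.isLt; omega)]
          show 0 < B (g (m : ℕ)) (g ((m + 1 : Fin n) : ℕ))
          rw [h2]
          exact h1
        have hne' : (Finset.univ : Finset (Fin n)).Nonempty := Finset.univ_nonempty
        set ε := Finset.univ.inf' hne' (fun m => B (f m) (f (m + 1))) with hε
        have hεpos : 0 < ε := by
          rw [hε, Finset.lt_inf'_iff]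
          intro m _
          exact hedge' m
        have hεle : ∀ m : Fin n, ε ≤ B (f m) (f (m + 1)) :=
          fun m => Finset.inf'_le _ (Finset.mem_univ m)
        obtain ⟨m0, -, hm0⟩ := Finset.exists_mem_eq_inf' hne' (fun m => B (f m) (f (m + 1)))
        set B' : Matrix (Fin q) (Fin q) ℝ :=
          Matrix.of (fun a b => B a b - ε * circ f a b) with hB'
        have hcircB : ∀ a b, circ f a b ≠ 0 → ε ≤ B a b := by
          intro a b hc
          have : ∃ m, a = f m ∧ b = f (m + 1) := by
            by_contra hno
            exact hc (by simp only [circ, Matrix.of_apply, if_neg hno])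
          obtain ⟨m, rfl, rfl⟩ := this
          exact hεle m
        have hB'nonneg : ∀ a b, 0 ≤ B' a b := by
          intro a b
          simp only [hB', Matrix.of_apply]
          by_cases hc : circ f a b = 0
          · rw [hc, mul_zero, sub_zero]; exact hB a b
          · have h1 : circ f a b = 1 := by
              simp only [circ, Matrix.of_apply] at hc ⊢
              split_ifs at hc ⊢ with h
              · rfl
              · exact absurd rfl hc
            rw [h1, mul_one, sub_nonneg]
            exact hcircB a b hc
        have hB'lss : LineSumSymm B' := by
          intro j
          simp only [hB', Matrix.of_apply]
          rw [Finset.sum_sub_distrib, Finset.sum_sub_distrib, ← Finset.mul_sum, ← Finset.mul_sum,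
            hlss j, circ_lss hfinj j]
        have hsub : Finset.filter (fun e : Fin q × Fin q => B' e.1 e.2 ≠ 0) Finset.univ
            ⊆ Finset.filter (fun e : Fin q × Fin q => B e.1 e.2 ≠ 0) Finset.univ := by
          intro e he
          simp only [Finset.mem_filter, Finset.mem_univ, true_and] at he ⊢
          intro hBe
          by_cases hc : circ f e.1 e.2 = 0
          · exact he (by simp only [hB', Matrix.of_apply, hc, mul_zero, sub_zero]; exact hBe)
          · have := hcircB e.1 e.2 hc
            rw [hBe] at this
            exact absurd (lt_of_lt_of_le hεpos this) (lt_irrefl 0)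
        have hmem0 : (f m0, f (m0 + 1)) ∈ Finset.filter
            (fun e : Fin q × Fin q => B e.1 e.2 ≠ 0) Finset.univ := by
          simp only [Finset.mem_filter, Finset.mem_univ, true_and]
          exact ne_of_gt (hedge' m0)
        have hnotmem : (f m0, f (m0 + 1)) ∉ Finset.filter
            (fun e : Fin q × Fin q => B' e.1 e.2 ≠ 0) Finset.univ := by
          simp only [Finset.mem_filter, Finset.mem_univ, true_and, not_not]
          simp only [hB', Matrix.of_apply]
          have h1 : circ f (f m0) (f (m0 + 1)) = 1 := by
            simp only [circ, Matrix.of_apply]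
            rw [if_pos ⟨m0, rfl, rfl⟩]
          rw [h1, mul_one, ← hm0, hε, sub_self]
        have hcard' : (Finset.filter (fun e : Fin q × Fin q => B' e.1 e.2 ≠ 0)
            Finset.univ).card ≤ N := by
          have hss : Finset.filter (fun e : Fin q × Fin q => B' e.1 e.2 ≠ 0) Finset.univ
              ⊂ Finset.filter (fun e : Fin q × Fin q => B e.1 e.2 ≠ 0) Finset.univ :=
            Finset.ssubset_iff_of_subset hsub |>.mpr ⟨_, hmem0, hnotmem⟩
          have := Finset.card_lt_card hss
          omega
        have hGm : (Gmat i k B).map (fun x => (x : ℂ))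
            = (Gmat i k B').map (fun x => (x : ℂ))
              + (ε : ℂ) • (Gmat i k (circ f)).map (fun x => (x : ℂ)) := by
          ext ⟨x1, x2⟩ ⟨y1, y2⟩
          simp only [Gmat, Matrix.map_apply, Matrix.add_apply, Matrix.smul_apply,
            Matrix.of_apply, hB', smul_eq_mul]
          split_ifs <;> push_cast <;>
            first
              | (rw [Finset.sum_sub_distrib, Finset.mul_sum]; ring)
              | ring
        rw [hGm]
        exact sepCone_add (ih B' hcard' hB'nonneg hB'lss)
          (sepCone_smul ε hεpos.le (sepCone_Gmat_circ f hfinj hik))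


def prodMat {p q : ℕ} (v : Fin p → ℝ) (w : Fin q → ℝ) :
    Matrix (Fin p × Fin q) (Fin p × Fin q) ℝ :=
  Matrix.of fun x y => v x.1 * w x.2 * (v y.1 * w y.2)

lemma sepCone_prodMat {p q : ℕ} (v : Fin p → ℝ) (w : Fin q → ℝ) :
    SepCone ((prodMat v w).map (fun x => (x : ℂ))) := by
  refine ⟨1, fun _ a => (v a : ℂ), fun _ b => (w b : ℂ), ?_⟩
  ext x y
  rw [Matrix.map_apply, Matrix.sum_apply, Fin.sum_univ_one]
  simp only [prodMat, outer, pv, Matrix.of_apply, _root_.map_mul, Complex.conj_ofReal]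
  push_cast
  ring

lemma mapC_add {p q : ℕ} (M N : Matrix (Fin p × Fin q) (Fin p × Fin q) ℝ) :
    (M + N).map (fun x => (x : ℂ))
      = M.map (fun x => (x : ℂ)) + N.map (fun x => (x : ℂ)) := by
  ext x y
  simp only [Matrix.map_apply, Matrix.add_apply]
  push_cast
  ring

lemma mapC_smul {p q : ℕ} (r : ℝ) (M : Matrix (Fin p × Fin q) (Fin p × Fin q) ℝ) :
    (r • M).map (fun x => (x : ℂ)) = (r : ℂ) • M.map (fun x => (x : ℂ)) := by
  ext x y
  simp only [Matrix.map_apply, Matrix.smul_apply, smul_eq_mul]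
  push_cast
  ring

lemma mapC_sum {p q : ℕ} {ι : Type*} (s : Finset ι)
    (f : ι → Matrix (Fin p × Fin q) (Fin p × Fin q) ℝ) :
    ((∑ i ∈ s, f i).map (fun x => (x : ℂ))) = ∑ i ∈ s, (f i).map (fun x => (x : ℂ)) := by
  ext x y
  simp only [Matrix.map_apply, Matrix.sum_apply]
  push_cast
  rfl

lemma sum_pair {q : ℕ} (c : Fin q → Fin q → ℝ) (hsym : ∀ a b, c a b = c b a)
    (hdiag : ∀ a, c a a = 0) (u v : Fin q) :
    (∑ j, ∑ l, c j l * (((if u = j then (1:ℝ) else 0) - (if u = l then 1 else 0))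
      * ((if v = j then 1 else 0) - (if v = l then 1 else 0))))
    = if u = v then 2 * ∑ l, c u l else -2 * c u v := by
  classical
  have expand : ∀ j l, c j l * (((if u = j then (1:ℝ) else 0) - (if u = l then 1 else 0))
      * ((if v = j then 1 else 0) - (if v = l then 1 else 0)))
      = (if u = j then (if v = j then c j l else 0) else 0)
        - (if u = j then (if v = l then c j l else 0) else 0)
        - (if u = l then (if v = j then c j l else 0) else 0)
        + (if u = l then (if v = l then c j l else 0) else 0) := by
    intro j l
    by_cases h5 : j = l
    · subst h5
      by_cases h1 : u = j <;> by_cases h3 : v = j <;> simp [h1, h3] <;> ring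
    · by_cases h1 : u = j <;> by_cases h2 : u = l <;> by_cases h3 : v = j <;>
        by_cases h4 : v = l <;> simp [h1, h2, h3, h4, h5, Ne.symm h5] <;> ring
  rw [Finset.sum_congr rfl fun j _ => Finset.sum_congr rfl fun l _ => expand j l]
  simp only [Finset.sum_add_distrib, Finset.sum_sub_distrib]
  have S1 : (∑ j, ∑ l, if u = j then (if v = j then c j l else 0) else 0)
      = if v = u then ∑ l, c u l else 0 := by
    rw [Finset.sum_eq_single u]
    · by_cases h : v = u <;> simp [h]
    · intro b _ hb
      exact Finset.sum_eq_zero fun l _ => if_neg (fun h => hb h.symm)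
    · intro h
      exact absurd (Finset.mem_univ u) h
  have S2 : (∑ j, ∑ l, if u = j then (if v = l then c j l else 0) else 0) = c u v := by
    rw [Finset.sum_eq_single u]
    · simp [Finset.sum_ite_eq]
    · intro b _ hb
      exact Finset.sum_eq_zero fun l _ => if_neg (fun h => hb h.symm)
    · intro h
      exact absurd (Finset.mem_univ u) h
  have S3 : (∑ j, ∑ l, if u = l then (if v = j then c j l else 0) else 0) = c v u := by
    have hinner : ∀ j, (∑ l, if u = l then (if v = j then c j l else 0) else 0)
        = if v = j then c j u else 0 := by
      intro j
      simp [Finset.sum_ite_eq]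
    rw [Finset.sum_congr rfl fun j _ => hinner j]
    simp [Finset.sum_ite_eq]
  have S4 : (∑ j, ∑ l, if u = l then (if v = l then c j l else 0) else 0)
      = if v = u then ∑ j, c j u else 0 := by
    have hinner : ∀ j, (∑ l, if u = l then (if v = l then c j l else 0) else 0)
        = if v = u then c j u else 0 := by
      intro j
      simp [Finset.sum_ite_eq]
    rw [Finset.sum_congr rfl fun j _ => hinner j]
    by_cases h : v = u <;> simp [h]
  rw [S1, S2, S3, S4]
  by_cases h : u = v
  · subst h
    rw [hdiag u, Finset.sum_congr rfl fun j (_ : j ∈ Finset.univ) => hsym j u]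
    simp
    try ring
  · rw [if_neg (fun h' => h h'.symm), if_neg (fun h' => h h'.symm), if_neg h, hsym v u]
    ring

end Stmt10Aux

/-- for `A ∈ S_1`, if every q×q block is line sum symmetric, then A is
separable in ℂ^p ⊗ ℂ^q. -/
theorem stmt10 {p q : ℕ} (A : Matrix (Fin p × Fin q) (Fin p × Fin q) ℝ)
    (hsymm : A.IsSymm)
    (hrow : ∀ x, 0 ≤ ∑ y, A x y)
    (hoff : ∀ x y, x ≠ y → A x y ≤ 0)
    (htr : A.trace = 1)
    (hblocks : ∀ i k : Fin p, LineSumSymm (blockOf A i k)) :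
    SeparableStateR A := by
  classical
  rcases Nat.eq_zero_or_pos p with hp0 | hp
  · exfalso
    subst hp0
    have h0 : A.trace = 0 := by simp [Matrix.trace]
    rw [h0] at htr
    exact zero_ne_one htr
  rcases Nat.eq_zero_or_pos q with hq0 | hq
  · exfalso
    subst hq0
    have h0 : A.trace = 0 := by simp [Matrix.trace]
    rw [h0] at htr
    exact zero_ne_one htr
  have hsA : ∀ x y, A y x = A x y := by
    intro x y
    calc A y x = Aᵀ x y := (Matrix.transpose_apply A x y).symm
      _ = A x y := by rw [hsymm]
  have hblss : ∀ (i k : Fin p) (j : Fin q),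
      (∑ l, A (i, j) (k, l)) = ∑ l, A (i, l) (k, j) := fun i k j => hblocks i k j
  set T1 : Matrix (Fin p × Fin q) (Fin p × Fin q) ℝ :=
    ∑ z : Fin p × Fin q, (∑ y', A z y') •
      Stmt10Aux.prodMat (fun a => if a = z.1 then 1 else 0)
        (fun b => if b = z.2 then 1 else 0) with hT1def
  set T2 : Matrix (Fin p × Fin q) (Fin p × Fin q) ℝ :=
    (1/2 : ℝ) • ∑ i : Fin p, ∑ j : Fin q, ∑ l : Fin q,
      (if j = l then 0 else -(A (i, j) (i, l))) •
        Stmt10Aux.prodMat (fun a => if a = i then 1 else 0)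
          (fun b => (if b = j then 1 else 0) - (if b = l then 1 else 0)) with hT2def
  set T3 : Matrix (Fin p × Fin q) (Fin p × Fin q) ℝ :=
    (1/2 : ℝ) • ∑ z : Fin p × Fin p,
      (if z.1 = z.2 then (0 : Matrix (Fin p × Fin q) (Fin p × Fin q) ℝ)
       else Stmt10Aux.Gmat z.1 z.2 (Matrix.of fun a b => -(A (z.1, a) (z.2, b)))) with hT3def
  have hT1e : ∀ x y : Fin p × Fin q, T1 x y = if x = y then (∑ y', A x y') else 0 := by
    intro x y
    rw [hT1def, Matrix.sum_apply]
    rw [Finset.sum_eq_single x]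
    · simp only [Matrix.smul_apply, Stmt10Aux.prodMat, Matrix.of_apply, smul_eq_mul,
        if_pos rfl]
      by_cases hxy : x = y
      · subst hxy
        simp
      · rw [if_neg hxy]
        have hne : y.1 ≠ x.1 ∨ y.2 ≠ x.2 := by
          by_contra h
          push_neg at h
          exact hxy (Prod.ext h.1.symm h.2.symm)
        rcases hne with h | h
        · rw [if_neg h]; ring
        · rw [if_neg h]; ring
    · intro z _ hzx
      simp only [Matrix.smul_apply, Stmt10Aux.prodMat, Matrix.of_apply, smul_eq_mul]
      have hne : x.1 ≠ z.1 ∨ x.2 ≠ z.2 := by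
        by_contra h
        push_neg at h
        exact hzx (Prod.ext h.1 h.2).symm
      rcases hne with h | h
      · rw [if_neg h]; ring
      · rw [if_neg h]; ring
    · intro h
      exact absurd (Finset.mem_univ x) h
  have hT2e : ∀ x y : Fin p × Fin q, T2 x y
      = if x.1 = y.1 then
          (if x.2 = y.2 then ∑ l, (if x.2 = l then 0 else -(A (x.1, x.2) (x.1, l)))
           else A (x.1, x.2) (x.1, y.2))
        else 0 := by
    intro x y
    rw [hT2def]
    simp only [Matrix.smul_apply, Matrix.sum_apply, Stmt10Aux.prodMat, Matrix.of_apply,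
      smul_eq_mul]
    rw [Finset.sum_eq_single x.1]
    · by_cases hxy1 : y.1 = x.1
      · have hre : ∀ j l : Fin q, (if j = l then (0:ℝ) else -(A (x.1, j) (x.1, l)))
            * ((if x.1 = x.1 then (1:ℝ) else 0)
                * ((if x.2 = j then (1:ℝ) else 0) - (if x.2 = l then 1 else 0))
              * ((if y.1 = x.1 then (1:ℝ) else 0)
                * ((if y.2 = j then (1:ℝ) else 0) - (if y.2 = l then 1 else 0))))
            = (if j = l then (0:ℝ) else -(A (x.1, j) (x.1, l)))
              * (((if x.2 = j then (1:ℝ) else 0) - (if x.2 = l then 1 else 0))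
                * ((if y.2 = j then (1:ℝ) else 0) - (if y.2 = l then 1 else 0))) := by
          intro j l
          rw [if_pos rfl, if_pos hxy1]
          ring
        rw [Finset.sum_congr rfl fun j _ => Finset.sum_congr rfl fun l _ => hre j l]
        have hsym' : ∀ a b : Fin q, (if a = b then (0:ℝ) else -(A (x.1, a) (x.1, b)))
            = (if b = a then (0:ℝ) else -(A (x.1, b) (x.1, a))) := by
          intro a b
          by_cases h : a = b
          · rw [if_pos h, if_pos h.symm]
          · rw [if_neg h, if_neg (Ne.symm h), hsA (x.1, b) (x.1, a)]
        have hdiag' : ∀ a : Fin q, (if a = a then (0:ℝ) else -(A (x.1, a) (x.1, a))) = 0 :=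
          fun a => if_pos rfl
        rw [Stmt10Aux.sum_pair _ hsym' hdiag' x.2 y.2, if_pos hxy1.symm]
        by_cases he2 : x.2 = y.2
        · rw [if_pos he2, if_pos he2]
          ring
        · rw [if_neg he2, if_neg he2, if_neg he2]
          ring
      · rw [Finset.sum_eq_zero fun j (_ : j ∈ Finset.univ) =>
            Finset.sum_eq_zero fun l (_ : l ∈ Finset.univ) => by rw [if_neg hxy1]; ring,
          if_neg (show ¬ x.1 = y.1 from fun h => hxy1 h.symm)]
        ring
    · intro b _ hb
      refine Finset.sum_eq_zero fun j _ => Finset.sum_eq_zero fun l _ => ?_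
      rw [if_neg (show ¬ x.1 = b from fun h => hb h.symm)]
      ring
    · intro h
      exact absurd (Finset.mem_univ x.1) h
  have hT3e : ∀ x y : Fin p × Fin q, T3 x y
      = if x.1 = y.1 then
          (if x.2 = y.2 then
            ∑ z1 ∈ Finset.univ.erase x.1, ∑ l, -(A (x.1, x.2) (z1, l)) else 0)
        else A x y := by
    intro x y
    rw [hT3def]
    simp only [Matrix.smul_apply, Matrix.sum_apply, smul_eq_mul]
    rw [Finset.sum_congr rfl fun z (_ : z ∈ Finset.univ) =>
      (apply_ite (fun M : Matrix (Fin p × Fin q) (Fin p × Fin q) ℝ => M x y) (z.1 = z.2) 0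
        (Stmt10Aux.Gmat z.1 z.2 (Matrix.of fun a b => -(A (z.1, a) (z.2, b)))))]
    simp only [Matrix.zero_apply]
    by_cases hxy1 : x.1 = y.1
    · have hpt : ∀ z : Fin p × Fin p,
          (if z.1 = z.2 then (0:ℝ)
            else Stmt10Aux.Gmat z.1 z.2 (Matrix.of fun a b => -(A (z.1, a) (z.2, b))) x y)
          = (if z.1 = x.1 ∧ z.2 ≠ x.1 then
              (if x.2 = y.2 then ∑ l, -(A (x.1, x.2) (z.2, l)) else 0) else 0)
            + (if z.2 = x.1 ∧ z.1 ≠ x.1 then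
              (if x.2 = y.2 then ∑ l, -(A (x.1, x.2) (z.1, l)) else 0) else 0) := by
        intro z
        by_cases hz : z.1 = z.2
        · rw [if_pos hz,
            if_neg (show ¬(z.1 = x.1 ∧ z.2 ≠ x.1) from fun h => h.2 (hz.symm.trans h.1)),
            if_neg (show ¬(z.2 = x.1 ∧ z.1 ≠ x.1) from fun h => h.2 (hz.trans h.1))]
          norm_num
        · rw [if_neg hz]
          simp only [Stmt10Aux.Gmat, Matrix.of_apply]
          by_cases hz1 : x.1 = z.1
          · rw [if_pos (show x.1 = z.1 ∧ y.1 = z.1 from ⟨hz1, hxy1.symm.trans hz1⟩),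
              if_pos (show z.1 = x.1 ∧ z.2 ≠ x.1 from
                ⟨hz1.symm, fun h => hz (hz1.symm.trans h.symm)⟩),
              if_neg (show ¬(z.2 = x.1 ∧ z.1 ≠ x.1) from fun h => h.2 hz1.symm),
              add_zero, ← hz1]
          · by_cases hz2 : x.1 = z.2
            · rw [if_neg (show ¬(x.1 = z.1 ∧ y.1 = z.1) from fun h => hz1 h.1),
                if_pos (show x.1 = z.2 ∧ y.1 = z.2 from ⟨hz2, hxy1.symm.trans hz2⟩),
                if_neg (show ¬(z.1 = x.1 ∧ z.2 ≠ x.1) from fun h => hz1 h.1.symm),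
                if_pos (show z.2 = x.1 ∧ z.1 ≠ x.1 from ⟨hz2.symm, fun h => hz1 h.symm⟩),
                zero_add]
              by_cases he2 : x.2 = y.2
              · rw [if_pos he2, if_pos he2, ← hz2]
                rw [Finset.sum_neg_distrib, Finset.sum_neg_distrib, hblss z.1 x.1 x.2,
                  Finset.sum_congr rfl fun l (_ : l ∈ Finset.univ) => hsA (x.1, x.2) (z.1, l)]
              · rw [if_neg he2, if_neg he2]
            · rw [if_neg (show ¬(x.1 = z.1 ∧ y.1 = z.1) from fun h => hz1 h.1),
                if_neg (show ¬(x.1 = z.2 ∧ y.1 = z.2) from fun h => hz2 h.1),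
                if_neg (show ¬(x.1 = z.1 ∧ y.1 = z.2) from fun h => hz1 h.1),
                if_neg (show ¬(x.1 = z.2 ∧ y.1 = z.1) from fun h => hz2 h.1),
                if_neg (show ¬(z.1 = x.1 ∧ z.2 ≠ x.1) from fun h => hz1 h.1.symm),
                if_neg (show ¬(z.2 = x.1 ∧ z.1 ≠ x.1) from fun h => hz2 h.1.symm)]
              norm_num
      rw [Finset.sum_congr rfl fun z _ => hpt z, Finset.sum_add_distrib]
      have hs1 : (∑ z : Fin p × Fin p, if z.1 = x.1 ∧ z.2 ≠ x.1 then
            (if x.2 = y.2 then ∑ l, -(A (x.1, x.2) (z.2, l)) else 0) else 0)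
          = ∑ z1 ∈ Finset.univ.erase x.1,
              (if x.2 = y.2 then ∑ l, -(A (x.1, x.2) (z1, l)) else 0) := by
        rw [Fintype.sum_prod_type]
        rw [Finset.sum_eq_single x.1]
        · rw [Finset.sum_congr rfl fun z2 (_ : z2 ∈ Finset.univ) =>
            if_congr (and_iff_right rfl) rfl rfl]
          rw [← Finset.sum_filter]
          congr 1
          exact Finset.filter_ne' Finset.univ x.1
        · intro b _ hb
          exact Finset.sum_eq_zero fun z2 _ => if_neg (fun h => hb h.1)
        · intro h
          exact absurd (Finset.mem_univ x.1) h
      have hs2 : (∑ z : Fin p × Fin p, if z.2 = x.1 ∧ z.1 ≠ x.1 then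
            (if x.2 = y.2 then ∑ l, -(A (x.1, x.2) (z.1, l)) else 0) else 0)
          = ∑ z1 ∈ Finset.univ.erase x.1,
              (if x.2 = y.2 then ∑ l, -(A (x.1, x.2) (z1, l)) else 0) := by
        rw [Fintype.sum_prod_type]
        have hinner : ∀ z1 : Fin p,
            (∑ z2 : Fin p, if z2 = x.1 ∧ z1 ≠ x.1 then
              (if x.2 = y.2 then ∑ l, -(A (x.1, x.2) (z1, l)) else 0) else 0)
            = if z1 ≠ x.1 then
                (if x.2 = y.2 then ∑ l, -(A (x.1, x.2) (z1, l)) else 0) else 0 := by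
          intro z1
          rw [Finset.sum_eq_single x.1]
          · by_cases h : z1 = x.1
            · rw [if_neg (show ¬(x.1 = x.1 ∧ z1 ≠ x.1) from fun hh => hh.2 h),
                if_neg (show ¬ z1 ≠ x.1 from fun hh => hh h)]
            · rw [if_pos (show x.1 = x.1 ∧ z1 ≠ x.1 from ⟨rfl, h⟩), if_pos h]
          · intro b _ hb
            exact if_neg (fun h => hb h.1)
          · intro h
            exact absurd (Finset.mem_univ x.1) h
        rw [Finset.sum_congr rfl fun z1 _ => hinner z1, ← Finset.sum_filter]
        congr 1
        exact Finset.filter_ne' Finset.univ x.1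
      rw [hs1, hs2, if_pos hxy1]
      by_cases he2 : x.2 = y.2
      · rw [if_pos he2,
          Finset.sum_congr rfl fun z1 (_ : z1 ∈ Finset.univ.erase x.1) => if_pos he2]
        ring
      · rw [if_neg he2,
          Finset.sum_congr rfl fun z1 (_ : z1 ∈ Finset.univ.erase x.1) => if_neg he2,
          Finset.sum_const_zero]
        norm_num
    · have hpt : ∀ z : Fin p × Fin p,
          (if z.1 = z.2 then (0:ℝ)
            else Stmt10Aux.Gmat z.1 z.2 (Matrix.of fun a b => -(A (z.1, a) (z.2, b))) x y)
          = (if z = (x.1, y.1) then A (x.1, x.2) (y.1, y.2) else 0)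
            + (if z = (y.1, x.1) then A (x.1, x.2) (y.1, y.2) else 0) := by
        intro z
        by_cases hz3 : z = (x.1, y.1)
        · have hz31 : z.1 = x.1 := by rw [hz3]
          have hz32 : z.2 = y.1 := by rw [hz3]
          rw [if_neg (show ¬ z.1 = z.2 from fun h =>
              hxy1 (hz31.symm.trans (h.trans hz32))),
            if_pos hz3,
            if_neg (show ¬ z = (y.1, x.1) from fun h =>
              hxy1 (hz31.symm.trans (by rw [h]))),
            add_zero]
          simp only [Stmt10Aux.Gmat, Matrix.of_apply]
          rw [if_neg (show ¬(x.1 = z.1 ∧ y.1 = z.1) from fun h =>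
              hxy1 (h.1.trans h.2.symm)),
            if_neg (show ¬(x.1 = z.2 ∧ y.1 = z.2) from fun h =>
              hxy1 (h.1.trans h.2.symm)),
            if_pos (show x.1 = z.1 ∧ y.1 = z.2 from ⟨hz31.symm, hz32.symm⟩),
            neg_neg, hz31, hz32]
        · by_cases hz4 : z = (y.1, x.1)
          · have hz41 : z.1 = y.1 := by rw [hz4]
            have hz42 : z.2 = x.1 := by rw [hz4]
            rw [if_neg (show ¬ z.1 = z.2 from fun h =>
                hxy1 (hz42.symm.trans (h.symm.trans hz41))),
              if_neg hz3, if_pos hz4, zero_add]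
            simp only [Stmt10Aux.Gmat, Matrix.of_apply]
            rw [if_neg (show ¬(x.1 = z.1 ∧ y.1 = z.1) from fun h =>
                hxy1 (h.1.trans h.2.symm)),
              if_neg (show ¬(x.1 = z.2 ∧ y.1 = z.2) from fun h =>
                hxy1 (h.1.trans h.2.symm)),
              if_neg (show ¬(x.1 = z.1 ∧ y.1 = z.2) from fun h =>
                hxy1 (h.1.trans hz41)),
              if_pos (show x.1 = z.2 ∧ y.1 = z.1 from ⟨hz42.symm, hz41.symm⟩),
              neg_neg, hz41, hz42, hsA (x.1, x.2) (y.1, y.2)]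
          · rw [if_neg hz3, if_neg hz4, add_zero]
            by_cases hz : z.1 = z.2
            · rw [if_pos hz]
            · rw [if_neg hz]
              simp only [Stmt10Aux.Gmat, Matrix.of_apply]
              rw [if_neg (show ¬(x.1 = z.1 ∧ y.1 = z.1) from fun h =>
                  hxy1 (h.1.trans h.2.symm)),
                if_neg (show ¬(x.1 = z.2 ∧ y.1 = z.2) from fun h =>
                  hxy1 (h.1.trans h.2.symm)),
                if_neg (show ¬(x.1 = z.1 ∧ y.1 = z.2) from fun h =>
                  hz3 (Prod.ext h.1.symm h.2.symm)),
                if_neg (show ¬(x.1 = z.2 ∧ y.1 = z.1) from fun h =>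
                  hz4 (Prod.ext h.2.symm h.1.symm))]
      rw [Finset.sum_congr rfl fun z _ => hpt z, Finset.sum_add_distrib,
        Finset.sum_ite_eq' Finset.univ ((x.1, y.1) : Fin p × Fin p)
          (fun _ => A (x.1, x.2) (y.1, y.2)),
        Finset.sum_ite_eq' Finset.univ ((y.1, x.1) : Fin p × Fin p)
          (fun _ => A (x.1, x.2) (y.1, y.2)),
        if_neg hxy1]
      simp only [Finset.mem_univ, if_true, Prod.mk.eta]
      ring
  have hAe : ∀ x y : Fin p × Fin q, A x y = T1 x y + T2 x y + T3 x y := by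
    intro x y
    rw [hT1e, hT2e, hT3e]
    by_cases h1 : x.1 = y.1
    · by_cases h2 : x.2 = y.2
      · have hxy : x = y := Prod.ext h1 h2
        rw [if_pos hxy, if_pos h1, if_pos h2, if_pos h1, if_pos h2, ← hxy]
        have e1 : (∑ y', A x y') = ∑ z1 : Fin p, ∑ l, A x (z1, l) :=
          Fintype.sum_prod_type _
        have e2 : (∑ z1 : Fin p, ∑ l, A x (z1, l))
            = (∑ l, A x (x.1, l)) + ∑ z1 ∈ Finset.univ.erase x.1, ∑ l, A x (z1, l) :=
          (Finset.add_sum_erase _ _ (Finset.mem_univ x.1)).symm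
        have e3 : (∑ l, A x (x.1, l))
            = A x (x.1, x.2) + ∑ l ∈ Finset.univ.erase x.2, A x (x.1, l) :=
          (Finset.add_sum_erase _ _ (Finset.mem_univ x.2)).symm
        have e4 : (∑ l, (if x.2 = l then (0:ℝ) else -(A (x.1, x.2) (x.1, l))))
            = ∑ l ∈ Finset.univ.erase x.2, -(A (x.1, x.2) (x.1, l)) := by
          rw [← Finset.add_sum_erase _ _ (Finset.mem_univ x.2), if_pos rfl, zero_add]
          refine Finset.sum_congr rfl fun l hl => ?_
          rw [if_neg (fun h => (Finset.mem_erase.mp hl).1 h.symm)]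
        have e5 : (∑ z1 ∈ Finset.univ.erase x.1, ∑ l, -(A (x.1, x.2) (z1, l)))
            = -(∑ z1 ∈ Finset.univ.erase x.1, ∑ l, A (x.1, x.2) (z1, l)) := by
          simp [Finset.sum_neg_distrib]
        have e6 : (∑ l ∈ Finset.univ.erase x.2, -(A (x.1, x.2) (x.1, l)))
            = -(∑ l ∈ Finset.univ.erase x.2, A (x.1, x.2) (x.1, l)) := by
          simp [Finset.sum_neg_distrib]
        rw [e1, e2, e3, e4, e5, e6]
        simp only [Prod.mk.eta]
        ring
      · have hxy : x ≠ y := fun h => h2 (congrArg Prod.snd h)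
        rw [if_neg hxy, if_pos h1, if_neg h2, if_pos h1, if_neg h2]
        rw [zero_add, add_zero, Prod.mk.eta, h1, Prod.mk.eta]
    · have hxy : x ≠ y := fun h => h1 (congrArg Prod.fst h)
      rw [if_neg hxy, if_neg h1, if_neg h1]
      ring
  have hdecomp : A = T1 + T2 + T3 := by
    ext x y
    rw [Matrix.add_apply, Matrix.add_apply]
    exact hAe x y
  show SeparableState (A.map (fun x => (x : ℂ)))
  refine Stmt10Aux.sepCone_separableState hp hq ?_ ?_
  · rw [hdecomp, Stmt10Aux.mapC_add, Stmt10Aux.mapC_add]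
    refine Stmt10Aux.sepCone_add (Stmt10Aux.sepCone_add ?_ ?_) ?_
    · rw [hT1def, Stmt10Aux.mapC_sum]
      refine Stmt10Aux.sepCone_sum _ _ fun z _ => ?_
      rw [Stmt10Aux.mapC_smul]
      exact Stmt10Aux.sepCone_smul _ (hrow z) (Stmt10Aux.sepCone_prodMat _ _)
    · rw [hT2def, Stmt10Aux.mapC_smul]
      refine Stmt10Aux.sepCone_smul _ (by norm_num) ?_
      rw [Stmt10Aux.mapC_sum]
      refine Stmt10Aux.sepCone_sum _ _ fun i _ => ?_
      rw [Stmt10Aux.mapC_sum]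
      refine Stmt10Aux.sepCone_sum _ _ fun j _ => ?_
      rw [Stmt10Aux.mapC_sum]
      refine Stmt10Aux.sepCone_sum _ _ fun l _ => ?_
      rw [Stmt10Aux.mapC_smul]
      refine Stmt10Aux.sepCone_smul _ ?_ (Stmt10Aux.sepCone_prodMat _ _)
      by_cases h : j = l
      · rw [if_pos h]
      · rw [if_neg h]
        have hne : ((i, j) : Fin p × Fin q) ≠ (i, l) :=
          fun hh => h (congrArg Prod.snd hh)
        linarith [hoff (i, j) (i, l) hne]
    · rw [hT3def, Stmt10Aux.mapC_smul]
      refine Stmt10Aux.sepCone_smul _ (by norm_num) ?_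
      rw [Stmt10Aux.mapC_sum]
      refine Stmt10Aux.sepCone_sum _ _ fun z _ => ?_
      by_cases hz : z.1 = z.2
      · rw [if_pos hz]
        have h0 : ((0 : Matrix (Fin p × Fin q) (Fin p × Fin q) ℝ).map (fun x => (x : ℂ)))
            = 0 := by
          ext x y
          simp
        rw [h0]
        exact Stmt10Aux.sepCone_zero
      · rw [if_neg hz]
        refine Stmt10Aux.sepCone_Gmat hz _ _ le_rfl ?_ ?_
        · intro a b
          have hne : ((z.1, a) : Fin p × Fin q) ≠ (z.2, b) :=
            fun h => hz (congrArg Prod.fst h)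
          simp only [Matrix.of_apply]
          linarith [hoff _ _ hne]
        · intro j
          simp only [Matrix.of_apply]
          rw [Finset.sum_neg_distrib, Finset.sum_neg_distrib, hblss z.1 z.2 j]
  · have htrc : (A.map (fun x => (x : ℂ))).trace = ((A.trace : ℝ) : ℂ) := by
      simp [Matrix.trace, Matrix.map_apply, Matrix.diag]
    rw [htrc, htr]
    norm_num
end
end
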